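/- arXiv:1707.02479 — 8 statements merged into one kernel-verified Lean document; each statement's English description precedes it below -/
import Mathlib

section
/- For every n ≥ 4, the derived subgroup 𝒜_{B_n} of the Artin group A_{B_n} of type B_n is normally generated, inside 𝒜_{B_n}, by the derived subgroup of its standard parabolic subgroup of type B_{n−1}: the smallest normal subgroup of 𝒜_{B_n} containing the commutator subgroup of the subgroup generated by σ_0, σ_1, …, σ_{n−2} is 𝒜_{B_n} itself. -/
open scoped MatrixGroups

/-- The defining relations of the Artin group of type `B_n`, as elements of the free group on
generators `σ_0, …, σ_{n-1}` (indexed by `Fin n`):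
`σ_0σ_1σ_0σ_1 = σ_1σ_0σ_1σ_0`; `σ_iσ_{i+1}σ_i = σ_{i+1}σ_iσ_{i+1}` for `1 ≤ i ≤ n-2`;
`σ_iσ_j = σ_jσ_i` for `j - i ≥ 2`. -/
def typeBRels (n : ℕ) : Set (FreeGroup (Fin n)) :=
  {x | ∃ i j : Fin n, (i : ℕ) = 0 ∧ (j : ℕ) = 1 ∧
    x = FreeGroup.of i * FreeGroup.of j * FreeGroup.of i * FreeGroup.of j *
      (FreeGroup.of j * FreeGroup.of i * FreeGroup.of j * FreeGroup.of i)⁻¹} ∪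
  {x | ∃ i j : Fin n, 1 ≤ (i : ℕ) ∧ (j : ℕ) = (i : ℕ) + 1 ∧
    x = FreeGroup.of i * FreeGroup.of j * FreeGroup.of i *
      (FreeGroup.of j * FreeGroup.of i * FreeGroup.of j)⁻¹} ∪
  {x | ∃ i j : Fin n, (i : ℕ) + 2 ≤ (j : ℕ) ∧
    x = FreeGroup.of i * FreeGroup.of j * (FreeGroup.of j * FreeGroup.of i)⁻¹}

/-- The Artin group of type `B_n`, presented by generators `σ_0, …, σ_{n-1}` and the
type `B_n` braid relations. -/
def ArtinTypeB (n : ℕ) : Type := PresentedGroup (typeBRels n)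

instance (n : ℕ) : Group (ArtinTypeB n) := by
  unfold ArtinTypeB; infer_instance

open scoped commutatorElement

/-- Every relator maps to `1` in the Artin group. -/
lemma artin_mk_rel {n : ℕ} {r : FreeGroup (Fin n)} (hr : r ∈ typeBRels n) :
    (PresentedGroup.mk (typeBRels n) r : ArtinTypeB n) = 1 := by
  rw [PresentedGroup.mk_eq_one_iff]
  exact Subgroup.subset_normalClosure hr

/-- The braid relations hold in the Artin group. -/
lemma artin_braid {n : ℕ} {i j : Fin n} (h1 : 1 ≤ (i : ℕ)) (h2 : (j : ℕ) = (i : ℕ) + 1) :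
    (PresentedGroup.of i : ArtinTypeB n) * PresentedGroup.of j * PresentedGroup.of i
      = PresentedGroup.of j * PresentedGroup.of i * PresentedGroup.of j := by
  have h := artin_mk_rel (n := n)
    (r := FreeGroup.of i * FreeGroup.of j * FreeGroup.of i *
      (FreeGroup.of j * FreeGroup.of i * FreeGroup.of j)⁻¹)
    (Or.inl (Or.inr ⟨i, j, h1, h2, rfl⟩))
  rw [map_mul, map_inv, mul_inv_eq_one] at h
  simpa [map_mul, PresentedGroup.of] using h

/-- The far commutation relations hold in the Artin group. -/
lemma artin_far {n : ℕ} {i j : Fin n} (h : (i : ℕ) + 2 ≤ (j : ℕ)) :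
    Commute (PresentedGroup.of i : ArtinTypeB n) (PresentedGroup.of j) := by
  have hh := artin_mk_rel (n := n)
    (r := FreeGroup.of i * FreeGroup.of j * (FreeGroup.of j * FreeGroup.of i)⁻¹)
    (Or.inr ⟨i, j, h, rfl⟩)
  rw [map_mul, map_inv, mul_inv_eq_one] at hh
  simpa [map_mul, Commute, SemiconjBy, PresentedGroup.of] using hh


set_option maxHeartbeats 1000000 in
/-- For `n ≥ 4`, the derived subgroup `𝒜_{B_n}` of the Artin group of type `B_n` is normally
generated, inside `𝒜_{B_n}`, by the derived subgroup of the standard parabolic subgroup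
generated by `σ_0, …, σ_{n-2}`. -/
theorem commutator_artinB_normally_generated_by_parabolic
    (n : ℕ) (hn : 4 ≤ n)
    (P : Subgroup (ArtinTypeB n))
    (hP : P = Subgroup.closure
      {x | ∃ i : Fin n, (i : ℕ) < n - 1 ∧ x = PresentedGroup.of i}) :
    Subgroup.normalClosure
        ((⁅P, P⁆.subgroupOf (commutator (ArtinTypeB n)) :
          Subgroup ↥(commutator (ArtinTypeB n))) : Set ↥(commutator (ArtinTypeB n))) = ⊤ := by
  classical
  set K : Subgroup (ArtinTypeB n) := commutator (ArtinTypeB n) with hK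
  set S : Set K := ((⁅P, P⁆.subgroupOf K : Subgroup K) : Set K) with hS
  set N : Subgroup K := Subgroup.normalClosure S with hN
  set M : Subgroup (ArtinTypeB n) := Subgroup.normalClosure ((⁅P, P⁆ : Subgroup (ArtinTypeB n)) : Set (ArtinTypeB n)) with hM
  haveI hMnorm : M.Normal := Subgroup.normalClosure_normal
  haveI hKnorm : K.Normal := by rw [hK]; infer_instance
  haveI hNnorm : N.Normal := Subgroup.normalClosure_normal
  -- generators
  set s : Fin n → (ArtinTypeB n) := fun i => PresentedGroup.of i with hs
  have hsP : ∀ i : Fin n, (i : ℕ) < n - 1 → s i ∈ P := by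
    intro i hi
    rw [hP]
    exact Subgroup.subset_closure ⟨i, hi, rfl⟩
  -- distinguished indices
  set c : Fin n := ⟨n - 3, by omega⟩ with hc
  set d : Fin n := ⟨n - 2, by omega⟩ with hd
  set e : Fin n := ⟨n - 1, by omega⟩ with he
  -- commutator subgroup ≤ M
  have hPPle : ⁅P, P⁆ ≤ M := fun x hx => Subgroup.subset_normalClosure hx
  set π : (ArtinTypeB n) →* (ArtinTypeB n) ⧸ M := QuotientGroup.mk' M with hπ
  set t : Fin n → (ArtinTypeB n) ⧸ M := fun i => π (s i) with ht
  have hgen : ∀ i j : Fin n, (i : ℕ) < n - 1 → (j : ℕ) < n - 1 → Commute (t i) (t j) := by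
    intro i j hi hj
    have hm : ⁅s i, s j⁆ ∈ M := hPPle (Subgroup.commutator_mem_commutator (hsP i hi) (hsP j hj))
    have h1 : ⁅π (s i), π (s j)⁆ = 1 := by
      rw [← map_commutatorElement]
      exact (QuotientGroup.eq_one_iff _).mpr hm
    exact commutatorElement_eq_one_iff_commute.mp h1
  have hbraid_cd : t c * t d * t c = t d * t c * t d := by
    have := artin_braid (n := n) (i := c) (j := d) (by simp [hc]; omega) (by simp [hc, hd]; omega)
    simpa [ht, map_mul] using congrArg π (show s c * s d * s c = s d * s c * s d from this)
  have hbraid_de : t d * t e * t d = t e * t d * t e := by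
    have := artin_braid (n := n) (i := d) (j := e) (by simp [hd]; omega) (by simp [hd, he]; omega)
    simpa [ht, map_mul] using congrArg π (show s d * s e * s d = s e * s d * s e from this)
  have hcd : t c = t d := by
    have hcomm : t c * t d = t d * t c := hgen c d (by simp [hc]; omega) (by simp [hd]; omega)
    have h2 : t d * (t c * t c) = t d * (t c * t d) := by
      calc t d * (t c * t c) = t c * t d * t c := by rw [hcomm]; group
        _ = t d * t c * t d := hbraid_cd
        _ = t d * (t c * t d) := by group
    exact mul_left_cancel (mul_left_cancel h2)
  have hce : Commute (t c) (t e) := by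
    have := artin_far (n := n) (i := c) (j := e) (by simp [hc, he]; omega)
    exact this.map π
  have hde : t d = t e := by
    have hcomm : t d * t e = t e * t d := by rw [← hcd]; exact hce
    have h2 : t e * (t d * t d) = t e * (t d * t e) := by
      calc t e * (t d * t d) = t d * t e * t d := by rw [hcomm]; group
        _ = t e * t d * t e := hbraid_de
        _ = t e * (t d * t e) := by group
    exact mul_left_cancel (mul_left_cancel h2)
  have hall : ∀ i j : Fin n, Commute (t i) (t j) := by
    have key : ∀ i : Fin n, (i : ℕ) < n - 1 → Commute (t i) (t e) := by
      intro i hi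
      rw [← hde]
      exact hgen i d hi (by simp [hd]; omega)
    intro i j
    rcases lt_or_ge (i : ℕ) (n - 1) with hi | hi
    · rcases lt_or_ge (j : ℕ) (n - 1) with hj | hj
      · exact hgen i j hi hj
      · have : j = e := by
          apply Fin.ext; simp [he]; omega
        rw [this]; exact key i hi
    · have hie : i = e := by apply Fin.ext; simp [he]; omega
      rcases lt_or_ge (j : ℕ) (n - 1) with hj | hj
      · rw [hie]; exact (key j hj).symm
      · have : j = e := by apply Fin.ext; simp [he]; omega
        rw [hie, this]
  -- the quotient (ArtinTypeB n) ⧸ M is commutative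
  have hGcomm : ∀ a b : (ArtinTypeB n) ⧸ M, Commute a b := by
    have htop : Subgroup.closure (Set.range t) = (⊤ : Subgroup ((ArtinTypeB n) ⧸ M)) := by
      have : Set.range t = π '' Set.range (PresentedGroup.of : Fin n → (ArtinTypeB n)) := by
        exact (Set.range_comp (⇑π) PresentedGroup.of)
      rw [this, ← MonoidHom.map_closure]
      have h1 : Subgroup.closure (Set.range (PresentedGroup.of : Fin n → (ArtinTypeB n))) = ⊤ :=
        PresentedGroup.closure_range_of _
      erw [h1]
      exact Subgroup.map_top_of_surjective π (QuotientGroup.mk'_surjective M)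
    intro a b
    have ha : a ∈ Subgroup.closure (Set.range t) := htop ▸ Subgroup.mem_top a
    have hb : b ∈ Subgroup.closure (Set.range t) := htop ▸ Subgroup.mem_top b
    induction ha, hb using Subgroup.closure_induction₂ with
    | mem x y hx hy =>
      obtain ⟨i, rfl⟩ := hx; obtain ⟨j, rfl⟩ := hy; exact hall i j
    | one_left x hx => exact Commute.one_left x
    | one_right x hx => exact Commute.one_right x
    | mul_left x y z hx hy hz h1 h2 => exact h1.mul_left h2
    | mul_right y z x hy hz hx h1 h2 => exact h1.mul_right h2
    | inv_left x y hx hy h1 => exact h1.inv_left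
    | inv_right x y hx hy h1 => exact h1.inv_right
  have hKM : K ≤ M := by
    rw [hK, commutator_def, Subgroup.commutator_le]
    intro g _ h _
    have h1 : π ⁅g, h⁆ = 1 := by
      rw [map_commutatorElement, commutatorElement_eq_one_iff_commute]
      exact hGcomm _ _
    exact (QuotientGroup.eq_one_iff _).mp h1
  -- ⁅P,P⁆ ≤ K
  have hPPK : ⁅P, P⁆ ≤ K := by
    rw [hK, commutator_def]
    exact Subgroup.commutator_mono le_top le_top
  -- N' := image of N in (ArtinTypeB n); show it is normal in (ArtinTypeB n)
  set N' : Subgroup (ArtinTypeB n) := N.map K.subtype with hN'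
  have hmemN' : ∀ x : (ArtinTypeB n), x ∈ N' ↔ ∃ h : x ∈ K, (⟨x, h⟩ : K) ∈ N := by
    intro x
    constructor
    · rintro ⟨y, hy, rfl⟩; exact ⟨y.2, hy⟩
    · rintro ⟨h, hx⟩; exact ⟨⟨x, h⟩, hx, rfl⟩
  -- conjugation by elements of K preserves N'
  have hKconj : ∀ k ∈ K, ∀ x ∈ N', k * x * k⁻¹ ∈ N' := by
    intro k hk x hx
    obtain ⟨y, hy, rfl⟩ := hx
    refine ⟨⟨k, hk⟩ * y * ⟨k, hk⟩⁻¹, hNnorm.conj_mem y hy ⟨k, hk⟩, rfl⟩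
  -- P normalizes ⁅P,P⁆
  have hPmap : ∀ p ∈ P, Subgroup.map (MulAut.conj p).toMonoidHom P = P := by
    intro p hp
    ext x
    simp only [Subgroup.mem_map, MulEquiv.coe_toMonoidHom, MulAut.conj_apply]
    constructor
    · rintro ⟨a, ha, rfl⟩
      exact P.mul_mem (P.mul_mem hp ha) (P.inv_mem hp)
    · intro hx
      refine ⟨p⁻¹ * x * p, P.mul_mem (P.mul_mem (P.inv_mem hp) hx) hp, by group⟩
  have hPPconj : ∀ p ∈ P, ∀ y ∈ ⁅P, P⁆, p * y * p⁻¹ ∈ ⁅P, P⁆ := by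
    intro p hp y hy
    have h1 := Subgroup.map_commutator (H₁ := P) (H₂ := P) (MulAut.conj p).toMonoidHom
    rw [hPmap p hp] at h1
    have : (MulAut.conj p).toMonoidHom y ∈ Subgroup.map (MulAut.conj p).toMonoidHom ⁅P, P⁆ :=
      Subgroup.mem_map_of_mem _ hy
    rw [h1] at this
    simpa using this
  -- conjugation by elements of P preserves N'
  have hPconj : ∀ p ∈ P, ∀ x ∈ N', p * x * p⁻¹ ∈ N' := by
    intro p hp x hx
    -- restriction of conjugation by p to K
    have hmem : ∀ z : K, p * (z : (ArtinTypeB n)) * p⁻¹ ∈ K := fun z => hKnorm.conj_mem z z.2 p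
    set f : K →* K :=
      { toFun := fun z => ⟨p * (z : (ArtinTypeB n)) * p⁻¹, hmem z⟩
        map_one' := by ext; simp
        map_mul' := by intro a b; ext; push_cast; group } with hf
    have hfS : ∀ z ∈ S, f z ∈ S := by
      intro z hz
      have hz' : (z : (ArtinTypeB n)) ∈ ⁅P, P⁆ := hz
      exact hPPconj p hp z hz'
    have hfN : ∀ z ∈ N, f z ∈ N := by
      intro z hz
      rw [hN, Subgroup.normalClosure] at hz
      induction hz using Subgroup.closure_induction with
      | mem w hw =>
        obtain ⟨a, ha, hconj⟩ := Group.mem_conjugatesOfSet_iff.mp hw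
        obtain ⟨u, hu⟩ := isConj_iff.mp hconj
        have : f w = f u * f a * (f u)⁻¹ := by rw [← hu]; simp only [map_mul, map_inv]
        rw [this]
        exact Subgroup.conjugatesOfSet_subset_normalClosure
          (Group.mem_conjugatesOfSet_iff.mpr ⟨f a, hfS a ha, isConj_iff.mpr ⟨f u, rfl⟩⟩)
      | one => simpa using N.one_mem
      | mul a b _ _ h1 h2 => rw [map_mul]; exact N.mul_mem h1 h2
      | inv a _ h1 => rw [map_inv]; exact N.inv_mem h1
    obtain ⟨y, hy, rfl⟩ := hx
    exact ⟨f y, hfN y hy, rfl⟩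
  -- both K and P are contained in the normalizer of N'
  have hnormalizer : ∀ g : (ArtinTypeB n), (∀ x ∈ N', g * x * g⁻¹ ∈ N') → (∀ x ∈ N', g⁻¹ * x * g ∈ N') →
      g ∈ Subgroup.normalizer (N' : Set (ArtinTypeB n)) := by
    intro g h1 h2
    rw [Subgroup.mem_normalizer_iff]
    intro x
    constructor
    · exact h1 x
    · intro hx
      have := h2 _ hx
      have heq : g⁻¹ * (g * x * g⁻¹) * g = x := by group
      rwa [heq] at this
  have hKnorm' : K ≤ Subgroup.normalizer (N' : Set (ArtinTypeB n)) := fun k hk =>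
    hnormalizer k (hKconj k hk) (by simpa using hKconj k⁻¹ (K.inv_mem hk))
  have hPnorm' : P ≤ Subgroup.normalizer (N' : Set (ArtinTypeB n)) := fun p hp =>
    hnormalizer p (hPconj p hp) (by simpa using hPconj p⁻¹ (P.inv_mem hp))
  -- σ_{n-1} ∈ K ⊔ P, hence all generators normalize N'
  have hsK : s e * (s d)⁻¹ ∈ K := by
    have hb : s d * s e * s d = s e * s d * s e := artin_braid (by simp [hd]; omega) (by simp [hd, he]; omega)
    have : ⁅s d * s e, s d⁆ = s e * (s d)⁻¹ := by
      rw [commutatorElement_def]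
      calc s d * s e * s d * ((s d * s e)⁻¹ * (s d)⁻¹)
          = s e * s d * s e * ((s d * s e)⁻¹ * (s d)⁻¹) := by rw [hb]
        _ = s e * (s d)⁻¹ := by group
    rw [← this, hK, commutator_def]
    exact Subgroup.commutator_mem_commutator (Subgroup.mem_top _) (Subgroup.mem_top _)
  have hgennorm : ∀ i : Fin n, s i ∈ Subgroup.normalizer (N' : Set (ArtinTypeB n)) := by
    intro i
    rcases lt_or_ge (i : ℕ) (n - 1) with hi | hi
    · exact hPnorm' (hsP i hi)
    · have : i = e := by apply Fin.ext; simp [he]; omega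
      rw [this]
      have : s e = (s e * (s d)⁻¹) * s d := by group
      rw [this]
      exact Subgroup.mul_mem _ (hKnorm' hsK) (hPnorm' (hsP d (by simp [hd]; omega)))
  haveI hN'norm : N'.Normal := by
    rw [← Subgroup.normalizer_eq_top_iff]
    rw [eq_top_iff, ← (show Subgroup.closure (Set.range s) = ⊤ from PresentedGroup.closure_range_of (typeBRels n)), Subgroup.closure_le]
    rintro x ⟨i, rfl⟩
    exact hgennorm i
  -- M ≤ N'
  have hMN' : M ≤ N' := by
    rw [hM]
    apply Subgroup.normalClosure_le_normal
    intro x hx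
    have hxK : x ∈ K := hPPK hx
    refine ⟨⟨x, hxK⟩, Subgroup.subset_normalClosure ?_, rfl⟩
    exact Subgroup.mem_subgroupOf.mpr hx
  -- conclude
  rw [Subgroup.eq_top_iff']
  intro x
  have hx : (x : (ArtinTypeB n)) ∈ N' := hMN' (hKM x.2)
  obtain ⟨y, hy, hyx⟩ := hx
  have : y = x := Subtype.ext hyx
  rwa [this] at hy
end

section
/- Let 1 ≤ r ≤ n−1 and identify the r-th exterior power Λ^r(F^n) with the free F-module on the basis e_I = v_{i_1} ∧ … ∧ v_{i_r}, indexed by the r-element subsets I = {i_1 < … < i_r} of {1, …, n}. Then the r-th exterior powers of the hook matrices act as follows: Λ^r(T) e_I = −β^{r−1} e_I if 1 ∈ I, and Λ^r(T) e_I = β^r e_I if 1 ∉ I; and for 1 ≤ k ≤ n−1: Λ^r(S_k) e_I = (−1)^r e_I if k ∉ I and k+1 ∉ I; Λ^r(S_k) e_I = (−1)^{r−1} α e_I if k ∈ I and k+1 ∈ I; Λ^r(S_k) e_I = (−1)^{r−1} [ ((α−1)/(1+β⁻¹α^{k−1})) e_I + ((α+β⁻¹α^{k−1})/(1+β⁻¹α^{k−1}))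 e_{I Δ {k,k+1}} ] if k ∈ I and k+1 ∉ I; and Λ^r(S_k) e_I = (−1)^{r−1} [ ((α−1)/(1+βα^{1−k})) e_I + ((α+βα^{1−k})/(1+βα^{1−k})) e_{I Δ {k,k+1}} ] if k ∉ I and k+1 ∈ I, where Δ denotes symmetric difference of sets. (Hence, up to the character sending T to β^{r−1} and each S_k to (−1)^{r−1}, the r-th exterior power of the hook representation coincides with the Hoefsmit representation attached to the double-partition ([1^{n−r}],[r]).) -/
open Matrix

/-- The hook matrix `T` of the Hoefsmit representation attached to `([1^{n-1}],[1])`. -/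
noncomputable def hookT (n : ℕ) (F : Type*) [Field F] (β : F) : Matrix (Fin n) (Fin n) F :=
  Matrix.diagonal (fun i => if (i : ℕ) = 0 then -1 else β)

/-- The hook matrix `S_k` of the Hoefsmit representation attached to `([1^{n-1}],[1])`. -/
noncomputable def hookS (n : ℕ) (F : Type*) [Field F] (α β : F) (k : ℕ) :
    Matrix (Fin n) (Fin n) F :=
  Matrix.of fun i j =>
    if (j : ℕ) + 1 = k then
      if (i : ℕ) + 1 = k then (α - 1) / (1 + β⁻¹ * α ^ ((k : ℤ) - 1))
      else if (i : ℕ) = k then (α + β⁻¹ * α ^ ((k : ℤ) - 1)) / (1 + β⁻¹ * α ^ ((k : ℤ) - 1))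
      else 0
    else if (j : ℕ) = k then
      if (i : ℕ) = k then (α - 1) / (1 + β * α ^ (1 - (k : ℤ)))
      else if (i : ℕ) + 1 = k then (α + β * α ^ (1 - (k : ℤ))) / (1 + β * α ^ (1 - (k : ℤ)))
      else 0
    else if i = j then -1 else 0

/-- The wedge `e_I = v_{i_1} ∧ ⋯ ∧ v_{i_r}` of the standard basis vectors indexed by the
elements `i_1 < ⋯ < i_r` of a finite set `I ⊆ {1, …, n}`, inside the exterior algebra of
`F^n`. -/
noncomputable def wedgeOf (n : ℕ) (F : Type*) [Field F] (I : Finset (Fin n)) :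
    ExteriorAlgebra F (Fin n → F) :=
  ((I.sort (· ≤ ·)).map
    (fun i => ExteriorAlgebra.ι F (Pi.single i (1 : F) : Fin n → F))).prod

section helpers

variable {n : ℕ} {F : Type*} [Field F]

private lemma map_wedge (f : (Fin n → F) →ₗ[F] (Fin n → F)) (I : Finset (Fin n)) :
    ExteriorAlgebra.map f (wedgeOf n F I)
      = ((I.sort (· ≤ ·)).map fun m =>
          ExteriorAlgebra.ι F (f (Pi.single m 1))).prod := by
  unfold wedgeOf
  rw [map_list_prod, List.map_map]
  exact congrArg List.prod (List.map_congr_left fun m _ => ExteriorAlgebra.map_apply_ι f _)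

private lemma prod_smul {A : Type*} [Ring A] [Algebra F A] {κ : Type*} (g : κ → F) (w : κ → A) :
    ∀ l : List κ, (l.map fun m => g m • w m).prod = (l.map g).prod • (l.map w).prod
  | [] => by simp
  | a :: t => by
    rw [List.map_cons, List.prod_cons, prod_smul g w t, List.map_cons, List.prod_cons,
      List.map_cons, List.prod_cons, smul_mul_assoc, mul_smul_comm, smul_smul]

private lemma sort_eq_of {s : Finset (Fin n)} {l : List (Fin n)} (hl : l.Pairwise (· < ·))
    (h : ∀ m, m ∈ l ↔ m ∈ s) : s.sort (· ≤ ·) = l :=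
  List.Perm.eq_of_pairwise' (Finset.pairwise_sort _ _) (hl.imp le_of_lt)
    (List.perm_of_nodup_nodup_toFinset_eq (Finset.sort_nodup _ _) hl.nodup
      (by ext m; simp [Finset.mem_sort, h]))

private lemma list_prod_sort (I : Finset (Fin n)) (g : Fin n → F) :
    ((I.sort (· ≤ ·)).map g).prod = ∏ m ∈ I, g m := by
  rw [← Finset.prod_map_toList]
  exact ((I.sort_perm_toList (· ≤ ·)).map g).prod_eq

private lemma hookT_col (β : F) (m : Fin n) :
    Matrix.toLin' (hookT n F β) (Pi.single m 1)
      = (if (m : ℕ) = 0 then (-1 : F) else β) • (Pi.single m 1 : Fin n → F) := by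
  rw [Matrix.toLin'_apply]
  unfold hookT
  rw [Matrix.diagonal_mulVec_single]
  ext i2
  by_cases h : i2 = m <;> simp [Pi.single_apply, h]

private lemma hookS_col_other (α β : F) (i j m : Fin n) (hji : (j : ℕ) = (i : ℕ) + 1)
    (hmi : m ≠ i) (hmj : m ≠ j) :
    Matrix.toLin' (hookS n F α β ((i : ℕ) + 1)) (Pi.single m 1)
      = (-1 : F) • (Pi.single m 1 : Fin n → F) := by
  rw [Matrix.toLin'_apply, Matrix.mulVec_single]
  have h1 : (m : ℕ) ≠ (i : ℕ) := fun h => hmi (Fin.ext h)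
  have h2 : (m : ℕ) ≠ (i : ℕ) + 1 := fun h => hmj (Fin.ext (h.trans hji.symm))
  ext i2
  by_cases h : i2 = m <;> simp [hookS, h1, h2, Pi.single_apply, h]

private lemma hookS_col_i (α β : F) (i j : Fin n) (hji : (j : ℕ) = (i : ℕ) + 1) :
    Matrix.toLin' (hookS n F α β ((i : ℕ) + 1)) (Pi.single i 1)
      = ((α - 1) / (1 + β⁻¹ * α ^ (((i : ℕ) : ℤ)))) • (Pi.single i 1 : Fin n → F)
        + ((α + β⁻¹ * α ^ (((i : ℕ) : ℤ))) / (1 + β⁻¹ * α ^ (((i : ℕ) : ℤ)))) •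
            (Pi.single j 1 : Fin n → F) := by
  rw [Matrix.toLin'_apply, Matrix.mulVec_single]
  have hcast : ((((i : ℕ) + 1 : ℕ)) : ℤ) - 1 = ((i : ℕ) : ℤ) := by push_cast; ring
  ext i2
  by_cases h1 : i2 = i
  · subst h1
    have hne : i2 ≠ j := fun h => by rw [h] at hji; omega
    simp [hookS, hcast, Pi.single_apply, hji, hne]
  · by_cases h2 : i2 = j
    · subst h2
      have ha : (i2 : ℕ) ≠ (i : ℕ) := by omega
      have h1 : i2 ≠ i := fun h => by rw [h] at hji; omega
      simp [hookS, hcast, Pi.single_apply, hji, ha, h1]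
    · have ha : (i2 : ℕ) ≠ (i : ℕ) := fun h => h1 (Fin.ext h)
      have hb : (i2 : ℕ) ≠ (i : ℕ) + 1 := fun h => h2 (Fin.ext (h.trans hji.symm))
      simp [hookS, hcast, ha, hb, Pi.single_apply, h1, h2]

private lemma hookS_col_j (α β : F) (i j : Fin n) (hji : (j : ℕ) = (i : ℕ) + 1) :
    Matrix.toLin' (hookS n F α β ((i : ℕ) + 1)) (Pi.single j 1)
      = ((α - 1) / (1 + β * α ^ (-((i : ℕ) : ℤ)))) • (Pi.single j 1 : Fin n → F)
        + ((α + β * α ^ (-((i : ℕ) : ℤ))) / (1 + β * α ^ (-((i : ℕ) : ℤ)))) •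
            (Pi.single i 1 : Fin n → F) := by
  rw [Matrix.toLin'_apply, Matrix.mulVec_single]
  have hcast : (1 : ℤ) - (((i : ℕ) + 1 : ℕ) : ℤ) = -((i : ℕ) : ℤ) := by push_cast; ring
  have hcol : (j : ℕ) + 1 ≠ (i : ℕ) + 1 := by omega
  have hij : i ≠ j := fun h => by rw [h] at hji; omega
  ext i2
  by_cases h1 : i2 = j
  · subst h1
    simp [hookS, hcast, Pi.single_apply, hji, hcol, hij.symm]
  · by_cases h2 : i2 = i
    · subst h2
      simp [hookS, hcast, Pi.single_apply, hji, hcol, h1]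
    · have ha : (i2 : ℕ) ≠ (i : ℕ) + 1 := fun h => h1 (Fin.ext (h.trans hji.symm))
      have hb : (i2 : ℕ) ≠ (i : ℕ) := fun h => h2 (Fin.ext h)
      have hji' : (j : ℕ) ≠ (i : ℕ) := by omega
      simp [hookS, hcast, hcol, ha, hb, hji', Pi.single_apply, h1, h2]

private lemma seg_prod (α β : F) (i j : Fin n) (hji : (j : ℕ) = (i : ℕ) + 1)
    (l : List (Fin n)) (h : ∀ m ∈ l, m ≠ i ∧ m ≠ j) :
    (l.map fun m => ExteriorAlgebra.ι F
        (Matrix.toLin' (hookS n F α β ((i : ℕ) + 1)) (Pi.single m 1))).prod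
      = ((-1 : F) ^ l.length) •
          (l.map fun m => ExteriorAlgebra.ι F (Pi.single m (1 : F) : Fin n → F)).prod := by
  have he : (l.map fun m => ExteriorAlgebra.ι F
        (Matrix.toLin' (hookS n F α β ((i : ℕ) + 1)) (Pi.single m 1)))
      = l.map fun m => (-1 : F) • ExteriorAlgebra.ι F (Pi.single m (1 : F) : Fin n → F) :=
    List.map_congr_left fun m hm => by
      rw [hookS_col_other α β i j m hji (h m hm).1 (h m hm).2, (ExteriorAlgebra.ι F).map_smul]
  rw [he, prod_smul]
  congr 1
  simp

end helpers

set_option maxHeartbeats 1000000 in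
/-- The action of the `r`-th exterior powers of the hook matrices on the basis
`(e_I)_{|I| = r}` of `Λ^r(F^n)`. -/
theorem exterior_power_of_hook_representation
    (n : ℕ) (hn : 2 ≤ n) (F : Type*) [Field F] (α β : F)
    (hα : α ≠ 0) (hβ0 : β ≠ 0)
    (hβ : ∀ i : ℤ, -((n : ℤ) - 1) ≤ i → i ≤ (n : ℤ) - 1 → β ≠ -α ^ i)
    (r : ℕ) (hr1 : 1 ≤ r) (hr2 : r ≤ n - 1)
    (I : Finset (Fin n)) (hI : I.card = r) :
    -- the action of Λʳ T
    (((⟨0, by omega⟩ : Fin n) ∈ I →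
      ExteriorAlgebra.map (Matrix.toLin' (hookT n F β)) (wedgeOf n F I) =
        (-(β ^ (r - 1))) • wedgeOf n F I) ∧
    ((⟨0, by omega⟩ : Fin n) ∉ I →
      ExteriorAlgebra.map (Matrix.toLin' (hookT n F β)) (wedgeOf n F I) =
        (β ^ r) • wedgeOf n F I)) ∧
    -- the action of Λʳ S_k, where `k = (i : ℕ) + 1` ranges over `1 ≤ k ≤ n - 1`
    (∀ i j : Fin n, (j : ℕ) = (i : ℕ) + 1 →
      (i ∉ I → j ∉ I →
        ExteriorAlgebra.map (Matrix.toLin' (hookS n F α β ((i : ℕ) + 1))) (wedgeOf n F I) =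
          ((-1 : F) ^ r) • wedgeOf n F I) ∧
      (i ∈ I → j ∈ I →
        ExteriorAlgebra.map (Matrix.toLin' (hookS n F α β ((i : ℕ) + 1))) (wedgeOf n F I) =
          ((-1 : F) ^ (r - 1) * α) • wedgeOf n F I) ∧
      (i ∈ I → j ∉ I →
        ExteriorAlgebra.map (Matrix.toLin' (hookS n F α β ((i : ℕ) + 1))) (wedgeOf n F I) =
          ((-1 : F) ^ (r - 1) * ((α - 1) / (1 + β⁻¹ * α ^ ((i : ℕ) : ℤ)))) • wedgeOf n F I +
          ((-1 : F) ^ (r - 1) *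
              ((α + β⁻¹ * α ^ ((i : ℕ) : ℤ)) / (1 + β⁻¹ * α ^ ((i : ℕ) : ℤ)))) •
            wedgeOf n F (symmDiff I {i, j})) ∧
      (i ∉ I → j ∈ I →
        ExteriorAlgebra.map (Matrix.toLin' (hookS n F α β ((i : ℕ) + 1))) (wedgeOf n F I) =
          ((-1 : F) ^ (r - 1) * ((α - 1) / (1 + β * α ^ (-((i : ℕ) : ℤ))))) • wedgeOf n F I +
          ((-1 : F) ^ (r - 1) *
              ((α + β * α ^ (-((i : ℕ) : ℤ))) / (1 + β * α ^ (-((i : ℕ) : ℤ))))) •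
            wedgeOf n F (symmDiff I {i, j}))) := by
  classical
  constructor
  · -- the T part
    have key : ExteriorAlgebra.map (Matrix.toLin' (hookT n F β)) (wedgeOf n F I)
        = (∏ m ∈ I, (if (m : ℕ) = 0 then (-1 : F) else β)) • wedgeOf n F I := by
      rw [map_wedge]
      have he : ((I.sort (· ≤ ·)).map fun m =>
            ExteriorAlgebra.ι F (Matrix.toLin' (hookT n F β) (Pi.single m 1)))
          = (I.sort (· ≤ ·)).map fun (m : Fin n) => (if (m : ℕ) = 0 then (-1 : F) else β) •
              ExteriorAlgebra.ι F (Pi.single m (1 : F) : Fin n → F) :=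
        List.map_congr_left fun m _ => by
          rw [hookT_col, (ExteriorAlgebra.ι F).map_smul]
      rw [he, prod_smul, list_prod_sort]
      rfl
    constructor
    · intro hz
      rw [key]
      congr 1
      rw [← Finset.mul_prod_erase I _ hz]
      have he : ∀ m ∈ I.erase (⟨0, by omega⟩ : Fin n),
          (if (m : ℕ) = 0 then (-1 : F) else β) = β := by
        intro m hm
        have h1 : m ≠ (⟨0, by omega⟩ : Fin n) := (Finset.mem_erase.1 hm).1
        have h2 : (m : ℕ) ≠ 0 := fun h => h1 (Fin.ext h)
        simp [h2]
      rw [Finset.prod_congr rfl he, Finset.prod_const, Finset.card_erase_of_mem hz, hI]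
      simp
    · intro hz
      rw [key]
      congr 1
      have he : ∀ m ∈ I, (if (m : ℕ) = 0 then (-1 : F) else β) = β := by
        intro m hm
        have h2 : (m : ℕ) ≠ 0 := by
          intro h
          exact hz (by rwa [show (⟨0, by omega⟩ : Fin n) = m from Fin.ext h.symm])
        simp [h2]
      rw [Finset.prod_congr rfl he, Finset.prod_const, hI]
  · -- the S part
    intro i j hji
    refine ⟨?_, ?_, ?_, ?_⟩
    · -- i ∉ I, j ∉ I
      intro hiI hjI
      rw [map_wedge, seg_prod α β i j hji _ (fun m hm => by
        have hmI : m ∈ I := (Finset.mem_sort _).1 hm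
        exact ⟨fun h => hiI (h ▸ hmI), fun h => hjI (h ▸ hmI)⟩)]
      rw [Finset.length_sort, hI]
      rfl
    · -- i ∈ I, j ∈ I
      intro hiI hjI
      have hij : (i : ℕ) < (j : ℕ) := by omega
      have hd1 : (1 : F) + β⁻¹ * α ^ (((i : ℕ) : ℤ)) ≠ 0 := by
        intro h
        have hb : β = -α ^ (((i : ℕ) : ℤ)) := by
          rw [zpow_natCast] at h ⊢
          field_simp at h
          linear_combination h
        exact hβ _ (by omega) (by have := i.isLt; omega) hb
      have hd2 : (1 : F) + β * α ^ (-((i : ℕ) : ℤ)) ≠ 0 := by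
        intro h
        have hα' : α ^ ((i : ℕ)) ≠ 0 := pow_ne_zero _ hα
        have hb : β = -α ^ (((i : ℕ) : ℤ)) := by
          rw [zpow_natCast]
          rw [_root_.zpow_neg, zpow_natCast] at h
          field_simp [hα'] at h
          linear_combination h
        exact hβ _ (by omega) (by have := i.isLt; omega) hb
      have hxy : (β⁻¹ * α ^ (((i : ℕ) : ℤ))) * (β * α ^ (-((i : ℕ) : ℤ))) = 1 := by
        have h1 : α ^ (((i : ℕ) : ℤ)) * α ^ (-((i : ℕ) : ℤ)) = 1 := by
          rw [← zpow_add₀ hα]; simp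
        calc (β⁻¹ * α ^ (((i : ℕ) : ℤ))) * (β * α ^ (-((i : ℕ) : ℤ)))
            = (β⁻¹ * β) * (α ^ (((i : ℕ) : ℤ)) * α ^ (-((i : ℕ) : ℤ))) := by ring
          _ = 1 := by rw [inv_mul_cancel₀ hβ0, h1, one_mul]
      have hkeygen : ∀ x y : F, 1 + x ≠ 0 → 1 + y ≠ 0 → x * y = 1 →
          (α - 1) / (1 + x) * ((α - 1) / (1 + y)) -
            (α + x) / (1 + x) * ((α + y) / (1 + y)) = -α := by
        intro x y hx hy hxy
        field_simp
        linear_combination (α - 1) * hxy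
      have hkey : ((α - 1) / (1 + β⁻¹ * α ^ (((i : ℕ) : ℤ)))) *
            ((α - 1) / (1 + β * α ^ (-((i : ℕ) : ℤ)))) -
          ((α + β⁻¹ * α ^ (((i : ℕ) : ℤ))) / (1 + β⁻¹ * α ^ (((i : ℕ) : ℤ)))) *
            ((α + β * α ^ (-((i : ℕ) : ℤ))) / (1 + β * α ^ (-((i : ℕ) : ℤ)))) = -α :=
        hkeygen _ _ hd1 hd2 hxy
      set P := (I.filter fun m => m < i).sort (· ≤ ·) with hPdef
      set Q := (I.filter fun m => j < m).sort (· ≤ ·) with hQdef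
      have hmemP : ∀ m, m ∈ P ↔ m ∈ I ∧ m < i := fun m => by
        rw [hPdef, Finset.mem_sort, Finset.mem_filter]
      have hmemQ : ∀ m, m ∈ Q ↔ m ∈ I ∧ j < m := fun m => by
        rw [hQdef, Finset.mem_sort, Finset.mem_filter]
      have hsort : I.sort (· ≤ ·) = P ++ i :: j :: Q := by
        apply sort_eq_of
        · refine List.pairwise_append.2 ⟨(Finset.sortedLT_sort _).pairwise,
            List.pairwise_cons.2 ⟨?_, List.pairwise_cons.2
              ⟨fun b hb => ((hmemQ b).1 hb).2, (Finset.sortedLT_sort _).pairwise⟩⟩,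
            fun a ha b hb => ?_⟩
          · intro b hb
            rcases List.mem_cons.1 hb with rfl | hb
            · exact Fin.lt_def.2 hij
            · exact lt_trans (Fin.lt_def.2 hij) ((hmemQ b).1 hb).2
          · have hai : a < i := ((hmemP a).1 ha).2
            rcases List.mem_cons.1 hb with rfl | hb
            · exact hai
            · rcases List.mem_cons.1 hb with rfl | hb
              · exact lt_trans hai (Fin.lt_def.2 hij)
              · exact lt_trans hai (lt_trans (Fin.lt_def.2 hij) ((hmemQ b).1 hb).2)
        · intro m
          simp only [List.mem_append, List.mem_cons, hmemP, hmemQ]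
          constructor
          · rintro (⟨h, _⟩ | rfl | rfl | ⟨h, _⟩) <;>
              first | exact h | exact hiI | exact hjI
          · intro hmI
            rcases lt_trichotomy m i with h | h | h
            · exact Or.inl ⟨hmI, h⟩
            · exact Or.inr (Or.inl h)
            · rcases lt_trichotomy m j with h2 | h2 | h2
              · exact absurd (Fin.lt_def.1 h2) (by have := Fin.lt_def.1 h; omega)
              · exact Or.inr (Or.inr (Or.inl h2))
              · exact Or.inr (Or.inr (Or.inr ⟨hmI, h2⟩))
      have hlen : (I.sort (· ≤ ·)).length = r := by rw [Finset.length_sort, hI]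
      rw [hsort] at hlen
      simp only [List.length_append, List.length_cons] at hlen
      have hPok : ∀ m ∈ P, m ≠ i ∧ m ≠ j := fun m hm =>
        ⟨ne_of_lt ((hmemP m).1 hm).2,
          ne_of_lt (lt_trans ((hmemP m).1 hm).2 (Fin.lt_def.2 hij))⟩
      have hQok : ∀ m ∈ Q, m ≠ i ∧ m ≠ j := fun m hm =>
        ⟨ne_of_gt (lt_trans (Fin.lt_def.2 hij) ((hmemQ m).1 hm).2),
          ne_of_gt ((hmemQ m).1 hm).2⟩
      rw [map_wedge, hsort, List.map_append, List.prod_append, List.map_cons, List.prod_cons,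
        List.map_cons, List.prod_cons,
        seg_prod α β i j hji P hPok, seg_prod α β i j hji Q hQok,
        hookS_col_i α β i j hji, hookS_col_j α β i j hji, map_add, map_add,
        (ExteriorAlgebra.ι F).map_smul, (ExteriorAlgebra.ι F).map_smul,
        (ExteriorAlgebra.ι F).map_smul, (ExteriorAlgebra.ι F).map_smul]
      rw [show wedgeOf n F I = ((P ++ i :: j :: Q).map fun m =>
          ExteriorAlgebra.ι F (Pi.single m (1 : F) : Fin n → F)).prod from by
        rw [← hsort]; rfl]
      simp only [List.map_append, List.prod_append, List.map_cons, List.prod_cons]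
      have hsq : ∀ (x : Fin n → F) (Y : ExteriorAlgebra F (Fin n → F)),
          ExteriorAlgebra.ι F x * (ExteriorAlgebra.ι F x * Y) = 0 := fun x Y => by
        rw [← mul_assoc, ExteriorAlgebra.ι_sq_zero, zero_mul]
      have hswap : ∀ (Y : ExteriorAlgebra F (Fin n → F)),
          ExteriorAlgebra.ι F (Pi.single j (1 : F) : Fin n → F) *
              (ExteriorAlgebra.ι F (Pi.single i (1 : F) : Fin n → F) * Y)
            = -(ExteriorAlgebra.ι F (Pi.single i (1 : F) : Fin n → F) *
              (ExteriorAlgebra.ι F (Pi.single j (1 : F) : Fin n → F) * Y)) := fun Y => by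
        rw [← mul_assoc, ← mul_assoc,
          eq_neg_of_add_eq_zero_right (ExteriorAlgebra.ι_add_mul_swap _ _), neg_mul]
      rw [show r - 1 = P.length + Q.length + 1 from by omega, pow_add, pow_succ]
      simp only [add_mul, mul_add, smul_mul_assoc, mul_smul_comm, smul_smul, smul_add,
        hsq, hswap, mul_zero, smul_zero, add_zero, zero_add, mul_neg, neg_mul, smul_neg,
        mul_one]
      match_scalars
      linear_combination ((-1 : F) ^ P.length * (-1 : F) ^ Q.length) * hkey
    · -- i ∈ I, j ∉ I
      intro hiI hjI
      have hij : (i : ℕ) < (j : ℕ) := by omega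
      set P := (I.filter fun m => m < i).sort (· ≤ ·) with hPdef
      set Q := (I.filter fun m => i < m).sort (· ≤ ·) with hQdef
      have hmemP : ∀ m, m ∈ P ↔ m ∈ I ∧ m < i := fun m => by
        rw [hPdef, Finset.mem_sort, Finset.mem_filter]
      have hmemQ : ∀ m, m ∈ Q ↔ m ∈ I ∧ i < m := fun m => by
        rw [hQdef, Finset.mem_sort, Finset.mem_filter]
      have hQj : ∀ m ∈ Q, j < m := by
        intro m hm
        obtain ⟨hmI, him⟩ := (hmemQ m).1 hm
        have h1 : m ≠ j := fun h => hjI (h ▸ hmI)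
        have h2 : (m : ℕ) ≠ (j : ℕ) := fun h => h1 (Fin.ext h)
        rw [Fin.lt_def] at him ⊢
        omega
      have hsort : I.sort (· ≤ ·) = P ++ i :: Q := by
        apply sort_eq_of
        · refine List.pairwise_append.2 ⟨(Finset.sortedLT_sort _).pairwise,
            List.pairwise_cons.2 ⟨fun b hb => ((hmemQ b).1 hb).2, (Finset.sortedLT_sort _).pairwise⟩,
            fun a ha b hb => ?_⟩
          rcases List.mem_cons.1 hb with rfl | hb
          · exact ((hmemP a).1 ha).2
          · exact lt_trans ((hmemP a).1 ha).2 ((hmemQ b).1 hb).2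
        · intro m
          simp only [List.mem_append, List.mem_cons, hmemP, hmemQ]
          constructor
          · rintro (⟨h, _⟩ | rfl | ⟨h, _⟩) <;> first | exact h | exact hiI
          · intro hmI
            rcases lt_trichotomy m i with h | h | h
            · exact Or.inl ⟨hmI, h⟩
            · exact Or.inr (Or.inl h)
            · exact Or.inr (Or.inr ⟨hmI, h⟩)
      have hsort2 : (symmDiff I {i, j}).sort (· ≤ ·) = P ++ j :: Q := by
        apply sort_eq_of
        · refine List.pairwise_append.2 ⟨(Finset.sortedLT_sort _).pairwise,
            List.pairwise_cons.2 ⟨fun b hb => hQj b hb, (Finset.sortedLT_sort _).pairwise⟩,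
            fun a ha b hb => ?_⟩
          have hai : a < i := ((hmemP a).1 ha).2
          have haj : a < j := lt_trans hai (Fin.lt_def.2 hij)
          rcases List.mem_cons.1 hb with rfl | hb
          · exact haj
          · exact lt_trans haj (hQj b hb)
        · intro m
          simp only [List.mem_append, List.mem_cons, hmemP, hmemQ, Finset.mem_symmDiff,
            Finset.mem_insert, Finset.mem_singleton]
          constructor
          · rintro (⟨hmI, hlt⟩ | rfl | ⟨hmI, hgt⟩)
            · refine Or.inl ⟨hmI, ?_⟩
              rintro (rfl | rfl)
              · exact absurd hlt (lt_irrefl _)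
              · exact absurd (lt_trans (Fin.lt_def.2 hij) hlt) (lt_irrefl _)
            · exact Or.inr ⟨Or.inr rfl, hjI⟩
            · refine Or.inl ⟨hmI, ?_⟩
              rintro (rfl | rfl)
              · exact absurd hgt (lt_irrefl _)
              · exact hjI hmI
          · rintro (⟨hmI, hm⟩ | ⟨(rfl | rfl), hmI⟩)
            · rcases lt_trichotomy m i with h | h | h
              · exact Or.inl ⟨hmI, h⟩
              · exact absurd (Or.inl h) hm
              · exact Or.inr (Or.inr ⟨hmI, h⟩)
            · exact absurd hiI hmI
            · exact Or.inr (Or.inl rfl)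
      have hlen : (I.sort (· ≤ ·)).length = r := by rw [Finset.length_sort, hI]
      rw [hsort] at hlen
      simp only [List.length_append, List.length_cons] at hlen
      have hPok : ∀ m ∈ P, m ≠ i ∧ m ≠ j := fun m hm =>
        ⟨ne_of_lt ((hmemP m).1 hm).2, fun h => hjI (h ▸ ((hmemP m).1 hm).1)⟩
      have hQok : ∀ m ∈ Q, m ≠ i ∧ m ≠ j := fun m hm =>
        ⟨ne_of_gt ((hmemQ m).1 hm).2, fun h => hjI (h ▸ ((hmemQ m).1 hm).1)⟩
      rw [map_wedge, hsort, List.map_append, List.prod_append, List.map_cons, List.prod_cons,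
        seg_prod α β i j hji P hPok, seg_prod α β i j hji Q hQok,
        hookS_col_i α β i j hji, map_add, (ExteriorAlgebra.ι F).map_smul,
        (ExteriorAlgebra.ι F).map_smul]
      rw [show wedgeOf n F I = ((P ++ i :: Q).map fun m =>
          ExteriorAlgebra.ι F (Pi.single m (1 : F) : Fin n → F)).prod from by
        rw [← hsort]; rfl]
      rw [show wedgeOf n F (symmDiff I {i, j}) = ((P ++ j :: Q).map fun m =>
          ExteriorAlgebra.ι F (Pi.single m (1 : F) : Fin n → F)).prod from by
        rw [← hsort2]; rfl]
      simp only [List.map_append, List.prod_append, List.map_cons, List.prod_cons]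
      rw [show r - 1 = P.length + Q.length from by omega, pow_add]
      simp only [add_mul, mul_add, smul_mul_assoc, mul_smul_comm, smul_smul, smul_add]
      match_scalars <;> ring
    · -- i ∉ I, j ∈ I
      intro hiI hjI
      have hij : (i : ℕ) < (j : ℕ) := by omega
      set P := (I.filter fun m => m < i).sort (· ≤ ·) with hPdef
      set Q := (I.filter fun m => j < m).sort (· ≤ ·) with hQdef
      have hmemP : ∀ m, m ∈ P ↔ m ∈ I ∧ m < i := fun m => by
        rw [hPdef, Finset.mem_sort, Finset.mem_filter]
      have hmemQ : ∀ m, m ∈ Q ↔ m ∈ I ∧ j < m := fun m => by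
        rw [hQdef, Finset.mem_sort, Finset.mem_filter]
      have hlti : ∀ m ∈ I, m < j → m < i := by
        intro m hmI hmj
        have h1 : m ≠ i := fun h => hiI (h ▸ hmI)
        have h2 : (m : ℕ) ≠ (i : ℕ) := fun h => h1 (Fin.ext h)
        rw [Fin.lt_def] at hmj ⊢
        omega
      have hsort : I.sort (· ≤ ·) = P ++ j :: Q := by
        apply sort_eq_of
        · refine List.pairwise_append.2 ⟨(Finset.sortedLT_sort _).pairwise,
            List.pairwise_cons.2 ⟨fun b hb => ((hmemQ b).1 hb).2, (Finset.sortedLT_sort _).pairwise⟩,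
            fun a ha b hb => ?_⟩
          have haj : a < j := lt_trans ((hmemP a).1 ha).2 (Fin.lt_def.2 hij)
          rcases List.mem_cons.1 hb with rfl | hb
          · exact haj
          · exact lt_trans haj ((hmemQ b).1 hb).2
        · intro m
          simp only [List.mem_append, List.mem_cons, hmemP, hmemQ]
          constructor
          · rintro (⟨h, _⟩ | rfl | ⟨h, _⟩) <;> first | exact h | exact hjI
          · intro hmI
            rcases lt_trichotomy m j with h | h | h
            · exact Or.inl ⟨hmI, hlti m hmI h⟩
            · exact Or.inr (Or.inl h)
            · exact Or.inr (Or.inr ⟨hmI, h⟩)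
      have hsort2 : (symmDiff I {i, j}).sort (· ≤ ·) = P ++ i :: Q := by
        apply sort_eq_of
        · refine List.pairwise_append.2 ⟨(Finset.sortedLT_sort _).pairwise,
            List.pairwise_cons.2 ⟨fun b hb =>
              lt_trans (Fin.lt_def.2 hij) ((hmemQ b).1 hb).2, (Finset.sortedLT_sort _).pairwise⟩,
            fun a ha b hb => ?_⟩
          have hai : a < i := ((hmemP a).1 ha).2
          rcases List.mem_cons.1 hb with rfl | hb
          · exact hai
          · exact lt_trans hai (lt_trans (Fin.lt_def.2 hij) ((hmemQ b).1 hb).2)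
        · intro m
          simp only [List.mem_append, List.mem_cons, hmemP, hmemQ, Finset.mem_symmDiff,
            Finset.mem_insert, Finset.mem_singleton]
          constructor
          · rintro (⟨hmI, hlt⟩ | rfl | ⟨hmI, hgt⟩)
            · refine Or.inl ⟨hmI, ?_⟩
              rintro (rfl | rfl)
              · exact absurd hlt (lt_irrefl _)
              · exact absurd (lt_trans (Fin.lt_def.2 hij) hlt) (lt_irrefl _)
            · exact Or.inr ⟨Or.inl rfl, hiI⟩
            · refine Or.inl ⟨hmI, ?_⟩
              rintro (rfl | rfl)
              · exact absurd (lt_trans (Fin.lt_def.2 hij) hgt) (lt_irrefl _)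
              · exact absurd hgt (lt_irrefl _)
          · rintro (⟨hmI, hm⟩ | ⟨(rfl | rfl), hmI⟩)
            · rcases lt_trichotomy m j with h | h | h
              · exact Or.inl ⟨hmI, hlti m hmI h⟩
              · exact absurd (Or.inr h) hm
              · exact Or.inr (Or.inr ⟨hmI, h⟩)
            · exact Or.inr (Or.inl rfl)
            · exact absurd hjI hmI
      have hlen : (I.sort (· ≤ ·)).length = r := by rw [Finset.length_sort, hI]
      rw [hsort] at hlen
      simp only [List.length_append, List.length_cons] at hlen
      have hPok : ∀ m ∈ P, m ≠ i ∧ m ≠ j := fun m hm =>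
        ⟨fun h => hiI (h ▸ ((hmemP m).1 hm).1),
          ne_of_lt (lt_trans ((hmemP m).1 hm).2 (Fin.lt_def.2 hij))⟩
      have hQok : ∀ m ∈ Q, m ≠ i ∧ m ≠ j := fun m hm =>
        ⟨fun h => hiI (h ▸ ((hmemQ m).1 hm).1), ne_of_gt ((hmemQ m).1 hm).2⟩
      rw [map_wedge, hsort, List.map_append, List.prod_append, List.map_cons, List.prod_cons,
        seg_prod α β i j hji P hPok, seg_prod α β i j hji Q hQok,
        hookS_col_j α β i j hji, map_add, (ExteriorAlgebra.ι F).map_smul,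
        (ExteriorAlgebra.ι F).map_smul]
      rw [show wedgeOf n F I = ((P ++ j :: Q).map fun m =>
          ExteriorAlgebra.ι F (Pi.single m (1 : F) : Fin n → F)).prod from by
        rw [← hsort]; rfl]
      rw [show wedgeOf n F (symmDiff I {i, j}) = ((P ++ i :: Q).map fun m =>
          ExteriorAlgebra.ι F (Pi.single m (1 : F) : Fin n → F)).prod from by
        rw [← hsort2]; rfl]
      simp only [List.map_append, List.prod_append, List.map_cons, List.prod_cons]
      rw [show r - 1 = P.length + Q.length from by omega, pow_add]
      simp only [add_mul, mul_add, smul_mul_assoc, mul_smul_comm, smul_smul, smul_add]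
      match_scalars <;> ring
end

section
/- Suppose given, for each natural number k, a linear order < on the set of partitions of k such that for all partitions a, b of k, if a < b and a ≠ bᵀ then aᵀ < bᵀ (where μᵀ denotes the conjugate/transposed partition). Extend it to double-partitions of n by: (λ_1, λ_2) < (μ_1, μ_2) if and only if |λ_1| < |μ_1|, or (|λ_1| = |μ_1| and λ_1 < μ_1), or (λ_1 = μ_1 and λ_2 < μ_2). For a double-partition λ = (λ_1, λ_2) of n write λ' = (λ_2ᵀ, λ_1ᵀ), and say λ satisfies property (*) if λ < λ' and λ < (λ_1ᵀ, λ_2ᵀ). Then for every double-partition λ = (λ_1, λ_2) of n with λ ≠ λ', λ ≠ (λ_2, λ_1) and λ ≠ (λ_1ᵀ, λ_2ᵀ), exactly one of the four double-partitions λ, λ', (λ_2, λ_1), (λ_1ᵀ, λ_2ᵀ) satisfies property (*). -/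
private lemma filter_pos_sum (s : Multiset ℕ) :
    (s.filter (fun c => 0 < c)).sum = s.sum := by
  induction s using Multiset.induction_on with
  | empty => simp
  | cons a s ih =>
    rcases Nat.eq_zero_or_pos a with ha | ha
    · subst ha; simp [Multiset.filter_cons, ih]
    · simp [Multiset.filter_cons, ha, ih]

private lemma sum_indicator_range (k a : ℕ) (hak : a ≤ k) :
    ((Multiset.range k).map (fun i => if i < a then (1 : ℕ) else 0)).sum = a := by
  induction k with
  | zero => simp; omega
  | succ k ih =>
    rw [Multiset.range_succ, Multiset.map_cons, Multiset.sum_cons]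
    by_cases h : a ≤ k
    · rw [if_neg (by omega), ih h]; omega
    · have hmap : ((Multiset.range k).map (fun i => if i < a then (1 : ℕ) else 0)) =
          (Multiset.range k).map (fun _ => (1 : ℕ)) :=
        Multiset.map_congr rfl (fun x hx => by
          rw [if_pos]; have := Multiset.mem_range.mp hx; omega)
    
      rw [if_pos (by omega), hmap, Multiset.map_const', Multiset.sum_replicate,
        Multiset.card_range, smul_eq_mul]
      omega

private lemma sum_card_filter_range (k : ℕ) (s : Multiset ℕ) (hbound : ∀ x ∈ s, x ≤ k) :
    ((Multiset.range k).map (fun i => Multiset.card (s.filter (fun p => i < p)))).sum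
      = s.sum := by
  induction s using Multiset.induction_on with
  | empty => simp
  | cons a s ih =>
    have h2 : ((Multiset.range k).map
          (fun i => Multiset.card ((a ::ₘ s).filter (fun p => i < p)))) =
        (Multiset.range k).map
          (fun i => (if i < a then (1 : ℕ) else 0) +
            Multiset.card (s.filter (fun p => i < p))) :=
      Multiset.map_congr rfl (fun x _ => by
        rw [Multiset.filter_cons, Multiset.card_add]
        by_cases h : x < a <;> simp [h])
    rw [h2, Multiset.sum_map_add, sum_indicator_range k a (hbound a (Multiset.mem_cons_self a s)),
      ih (fun x hx => hbound x (Multiset.mem_cons_of_mem hx)), Multiset.sum_cons]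

/-- The conjugate (transpose) of a partition. -/
def Nat.Partition.conj {k : ℕ} (P : Nat.Partition k) : Nat.Partition k where
  parts :=
    ((Multiset.range k).map
      (fun i => Multiset.card (P.parts.filter (fun p => i < p)))).filter (fun c => 0 < c)
  parts_pos := by
    intro i hi
    exact (Multiset.mem_filter.mp hi).2
  parts_sum := by
    rw [filter_pos_sum, sum_card_filter_range]
    · exact P.parts_sum
    · intro x hx
      calc x ≤ P.parts.sum := Multiset.single_le_sum (fun y _ => Nat.zero_le y) x hx
        _ = k := P.parts_sum

/-- A double-partition of `n`: a pair of partitions of `r` and `s` with `r + s = n`. -/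
structure DoublePartition (n : ℕ) where
  r : ℕ
  s : ℕ
  sum_eq : r + s = n
  p1 : Nat.Partition r
  p2 : Nat.Partition s

namespace DoublePartition

variable {n : ℕ}

/-- The transpose `λ' = (λ₂ᵀ, λ₁ᵀ)` of a double-partition `λ = (λ₁, λ₂)`. -/
def trans (A : DoublePartition n) : DoublePartition n :=
  ⟨A.s, A.r, by have := A.sum_eq; omega, A.p2.conj, A.p1.conj⟩

/-- The swap `(λ₂, λ₁)` of a double-partition `λ = (λ₁, λ₂)`. -/
def swap (A : DoublePartition n) : DoublePartition n :=
  ⟨A.s, A.r, by have := A.sum_eq; omega, A.p2, A.p1⟩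

/-- The componentwise conjugate `(λ₁ᵀ, λ₂ᵀ)` of a double-partition `λ = (λ₁, λ₂)`. -/
def conjComp (A : DoublePartition n) : DoublePartition n :=
  ⟨A.r, A.s, A.sum_eq, A.p1.conj, A.p2.conj⟩

/-- The order on double-partitions of `n` induced by a family of orders on partitions:
`(λ₁, λ₂) < (μ₁, μ₂)` iff `|λ₁| < |μ₁|`, or (`|λ₁| = |μ₁|` and `λ₁ < μ₁`), or
(`λ₁ = μ₁` and `λ₂ < μ₂`). -/
def dlt (ord : ∀ k : ℕ, Nat.Partition k → Nat.Partition k → Prop)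
    (A B : DoublePartition n) : Prop :=
  A.r < B.r ∨
    ∃ h1 : A.r = B.r,
      ord B.r (h1 ▸ A.p1) B.p1 ∨
        ((h1 ▸ A.p1) = B.p1 ∧ ∃ h2 : A.s = B.s, ord B.s (h2 ▸ A.p2) B.p2)

end DoublePartition

-- F s j = number of parts of s greater than j
private def Fc (s : Multiset ℕ) (j : ℕ) : ℕ := Multiset.card (s.filter (fun p => j < p))

private lemma Fc_filter_pos (s : Multiset ℕ) (j : ℕ) :
    Fc (s.filter (fun c => 0 < c)) j = Fc s j := by
  unfold Fc
  rw [Multiset.filter_filter]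
  congr 1
  exact Multiset.filter_congr (fun x _ => by constructor <;> intro h <;> omega)

private lemma Fc_map_range (c : ℕ → ℕ) (k j : ℕ) :
    Fc ((Multiset.range k).map c) j = ((Finset.range k).filter (fun i => j < c i)).card := by
  unfold Fc
  rw [Multiset.filter_map, Multiset.card_map]
  rfl

private lemma Fc_antitone (s : Multiset ℕ) {i i' : ℕ} (h : i ≤ i') : Fc s i' ≤ Fc s i := by
  exact Multiset.card_le_card (Multiset.monotone_filter_right s (fun x hx => by omega))

private lemma Fc_le_card (s : Multiset ℕ) (j : ℕ) : Fc s j ≤ Multiset.card s :=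
  Multiset.card_le_card (Multiset.filter_le _ s)

private lemma Fc_eq_zero (s : Multiset ℕ) {k j : ℕ} (hb : ∀ x ∈ s, x ≤ k) (hj : k ≤ j) :
    Fc s j = 0 := by
  unfold Fc
  rw [Multiset.card_eq_zero, Multiset.filter_eq_nil]
  intro a ha
  have := hb a ha
  omega

-- key lemma E
private lemma key_equiv (s : Multiset ℕ) (k : ℕ) {i : ℕ} (hi : i < k) (j : ℕ) :
    j < Fc s i ↔ i < ((Finset.range k).filter (fun i' => j < Fc s i')).card := by
  constructor
  · intro h
    have hsub : Finset.range (i + 1) ⊆ (Finset.range k).filter (fun i' => j < Fc s i') := by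
      intro x hx
      simp only [Finset.mem_range] at hx
      simp only [Finset.mem_filter, Finset.mem_range]
      exact ⟨by omega, lt_of_lt_of_le h (Fc_antitone s (by omega))⟩
    have := Finset.card_le_card hsub
    simpa using this
  · intro h
    by_contra hc
    push_neg at hc
    have hsub : (Finset.range k).filter (fun i' => j < Fc s i') ⊆ Finset.range i := by
      intro x hx
      simp only [Finset.mem_filter, Finset.mem_range] at hx
      simp only [Finset.mem_range]
      by_contra hxi
      push_neg at hxi
      have := Fc_antitone s hxi
      omega
    have := Finset.card_le_card hsub
    simp only [Finset.card_range] at this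
    omega

private lemma filter_lt_card (k m : ℕ) (hm : m ≤ k) :
    ((Finset.range k).filter (fun j => j < m)).card = m := by
  have : (Finset.range k).filter (fun j => j < m) = Finset.range m := by
    ext j
    simp only [Finset.mem_filter, Finset.mem_range]
    omega
  rw [this, Finset.card_range]

-- count lemma
private lemma Fc_succ (m : Multiset ℕ) (a : ℕ) :
    Fc m a = Fc m (a + 1) + m.count (a + 1) := by
  induction m using Multiset.induction_on with
  | empty => simp [Fc]
  | cons b m ih =>
    simp only [Fc] at ih ⊢
    rw [Multiset.filter_cons, Multiset.filter_cons, Multiset.count_cons]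
    by_cases h1 : a < b <;> by_cases h2 : a + 1 < b <;> by_cases h3 : a + 1 = b <;>
      simp [h1, h2, h3] at ih ⊢ <;> omega

private lemma eq_of_Fc_eq (s t : Multiset ℕ) (hs : ∀ x ∈ s, 0 < x) (ht : ∀ x ∈ t, 0 < x)
    (h : ∀ j, Fc s j = Fc t j) : s = t := by
  ext a
  cases a with
  | zero =>
    rw [Multiset.count_eq_zero_of_notMem, Multiset.count_eq_zero_of_notMem]
    · intro hm; exact absurd (ht 0 hm) (by omega)
    · intro hm; exact absurd (hs 0 hm) (by omega)
  | succ a =>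
    have h1 := Fc_succ s a
    have h2 := Fc_succ t a
    have := h a
    have := h (a + 1)
    omega

private lemma card_le_sum_of_pos (s : Multiset ℕ) (hs : ∀ x ∈ s, 0 < x) :
    Multiset.card s ≤ s.sum := by
  induction s using Multiset.induction_on with
  | empty => simp
  | cons a s ih =>
    simp only [Multiset.card_cons, Multiset.sum_cons]
    have ha := hs a (Multiset.mem_cons_self a s)
    have := ih (fun x hx => hs x (Multiset.mem_cons_of_mem hx))
    omega

private lemma conj_parts (k : ℕ) (P : Nat.Partition k) :
    P.conj.parts = ((Multiset.range k).map (fun i => Fc P.parts i)).filter (fun c => 0 < c) := rfl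

private lemma Fc_conj (k : ℕ) (P : Nat.Partition k) (j : ℕ) :
    Fc P.conj.parts j = ((Finset.range k).filter (fun i => j < Fc P.parts i)).card := by
  rw [conj_parts, Fc_filter_pos, Fc_map_range]

private lemma conj_conj {k : ℕ} (P : Nat.Partition k) : P.conj.conj = P := by
  have hle : ∀ x ∈ P.parts, x ≤ k := fun x hx => by
    calc x ≤ P.parts.sum := Multiset.single_le_sum (fun y _ => Nat.zero_le y) x hx
      _ = k := P.parts_sum
  have hcard : ∀ j, Fc P.parts j ≤ k := by
    intro j
    calc Fc P.parts j ≤ Multiset.card P.parts := Fc_le_card _ _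
      _ ≤ P.parts.sum := card_le_sum_of_pos _ (fun x hx => P.parts_pos hx)
      _ = k := P.parts_sum
  ext1
  apply eq_of_Fc_eq
  · intro x hx
    exact P.conj.conj.parts_pos hx
  · intro x hx
    exact P.parts_pos hx
  intro j
  rw [Fc_conj]
  by_cases hj : j < k
  · have hfc : (Finset.range k).filter (fun i => j < Fc P.conj.parts i)
        = (Finset.range k).filter (fun i => i < Fc P.parts j) := by
      apply Finset.filter_congr
      intro t ht
      rw [Fc_conj]
      exact (key_equiv P.parts k hj t).symm
    rw [hfc, filter_lt_card k _ (hcard j)]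
  · have h0 : Fc P.parts j = 0 := Fc_eq_zero _ hle (by omega)
    rw [h0, Finset.card_eq_zero, Finset.filter_eq_empty_iff]
    intro t _
    have : Fc P.conj.parts t ≤ k := by
      rw [Fc_conj]
      calc ((Finset.range k).filter _).card ≤ (Finset.range k).card := Finset.card_filter_le _ _
        _ = k := Finset.card_range k
    omega

section MainAux

private lemma dlt_mk_iff (ord : ∀ k : ℕ, Nat.Partition k → Nat.Partition k → Prop)
    {n r s : ℕ} {h h' : r + s = n} {a c : Nat.Partition r} {b d : Nat.Partition s} :
    DoublePartition.dlt ord (⟨r,s,h,a,b⟩ : DoublePartition n) ⟨r,s,h',c,d⟩ ↔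
      (ord r a c ∨ (a = c ∧ ord s b d)) := by
  unfold DoublePartition.dlt
  dsimp only
  constructor
  · rintro (hlt | ⟨h1, h2 | ⟨he, h3, h4⟩⟩)
    · omega
    · exact Or.inl h2
    · exact Or.inr ⟨he, h4⟩
  · rintro (hor | ⟨he, hord2⟩)
    · exact Or.inr ⟨rfl, Or.inl hor⟩
    · exact Or.inr ⟨rfl, Or.inr ⟨he, rfl, hord2⟩⟩

private lemma dp_mk_eq_iff {n r s : ℕ} {h h' : r + s = n} {a c : Nat.Partition r}
    {b d : Nat.Partition s} :
    (⟨r,s,h,a,b⟩ : DoublePartition n) = ⟨r,s,h',c,d⟩ ↔ (a = c ∧ b = d) := by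
  constructor
  · intro he
    injection he with e1 e2 e3 e4
    exact ⟨e3, e4⟩
  · rintro ⟨rfl, rfl⟩; rfl

private lemma not_dlt_mk (ord : ∀ k : ℕ, Nat.Partition k → Nat.Partition k → Prop)
    {n r1 s1 r2 s2 : ℕ} {h : r1 + s1 = n} {h' : r2 + s2 = n}
    {a : Nat.Partition r1} {b : Nat.Partition s1} {c : Nat.Partition r2}
    {d : Nat.Partition s2} (hgt : r2 < r1) :
    ¬ DoublePartition.dlt ord (⟨r1,s1,h,a,b⟩ : DoublePartition n) ⟨r2,s2,h',c,d⟩ := by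
  rintro (hl | ⟨he, -⟩)
  · have h2 : r1 < r2 := hl
    omega
  · have h2 : r1 = r2 := he
    omega

private lemma conjComp_mk {n r s : ℕ} {h : r + s = n} {a : Nat.Partition r}
    {b : Nat.Partition s} :
    DoublePartition.conjComp (⟨r,s,h,a,b⟩ : DoublePartition n) = ⟨r,s,h,a.conj,b.conj⟩ := rfl

private lemma trans_mk {n r s : ℕ} {h : r + s = n} {a : Nat.Partition r}
    {b : Nat.Partition s} :
    DoublePartition.trans (⟨r,s,h,a,b⟩ : DoublePartition n) =
      ⟨s,r,by omega,b.conj,a.conj⟩ := rfl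

private lemma swap_mk {n r s : ℕ} {h : r + s = n} {a : Nat.Partition r}
    {b : Nat.Partition s} :
    DoublePartition.swap (⟨r,s,h,a,b⟩ : DoublePartition n) = ⟨s,r,by omega,b,a⟩ := rfl

end MainAux

/-- If `λ = (λ₁, λ₂)` is a double-partition with `λ ≠ λ'`, `λ ≠ (λ₂, λ₁)` and
`λ ≠ (λ₁ᵀ, λ₂ᵀ)`, then exactly one of the four double-partitions
`λ, λ', (λ₂, λ₁), (λ₁ᵀ, λ₂ᵀ)` satisfies property `(*)`:
`μ < μ'` and `μ < (μ₁ᵀ, μ₂ᵀ)`. -/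
theorem exactly_one_satisfies_star
    (ord : ∀ k : ℕ, Nat.Partition k → Nat.Partition k → Prop)
    (hord : ∀ k : ℕ, IsStrictTotalOrder (Nat.Partition k) (ord k))
    (hcompat : ∀ (k : ℕ) (a b : Nat.Partition k),
      ord k a b → a ≠ b.conj → ord k a.conj b.conj)
    (n : ℕ) (A : DoublePartition n)
    (h1 : A ≠ A.trans) (h2 : A ≠ A.swap) (h3 : A ≠ A.conjComp) :
    ∃! X : DoublePartition n,
      X ∈ ({A, A.trans, A.swap, A.conjComp} : Set (DoublePartition n)) ∧
        (DoublePartition.dlt ord X X.trans ∧ DoublePartition.dlt ord X X.conjComp) := by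
  have oasym : ∀ (k : ℕ) (a b : Nat.Partition k), ord k a b → ord k b a → False :=
    fun k a b h h' => (hord k).irrefl a ((hord k).trans _ _ _ h h')
  have oirr : ∀ (k : ℕ) (a : Nat.Partition k), ¬ ord k a a := fun k a => (hord k).irrefl a
  obtain ⟨r, s, hrs, p, q⟩ := A
  rcases Nat.lt_trichotomy r s with hlt | heq | hgt
  · -- r < s : candidates A and C
    simp only [ne_eq, conjComp_mk, dp_mk_eq_iff] at h3
    have uniqTS : ∀ Y : DoublePartition n,
        Y = DoublePartition.trans ⟨r,s,hrs,p,q⟩ ∨ Y = DoublePartition.swap ⟨r,s,hrs,p,q⟩ →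
        DoublePartition.dlt ord Y Y.trans → False := by
      rintro Y (rfl | rfl) hs1 <;>
        simp only [trans_mk, swap_mk, conj_conj] at hs1 <;>
        exact not_dlt_mk ord hlt hs1
    rcases trichotomous (r := ord r) p p.conj with OP | pe | OP'
    · -- witness A
      refine ⟨⟨r,s,hrs,p,q⟩, ⟨Set.mem_insert _ _, Or.inl hlt, ?_⟩, ?_⟩
      · simp only [conjComp_mk, dlt_mk_iff]
        exact Or.inl OP
      · rintro Y ⟨hmem, hs1, hs2⟩
        simp only [Set.mem_insert_iff, Set.mem_singleton_iff] at hmem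
        rcases hmem with rfl | rfl | rfl | rfl
        · rfl
        · exact (uniqTS _ (Or.inl rfl) hs1).elim
        · exact (uniqTS _ (Or.inr rfl) hs1).elim
        · simp only [conjComp_mk, conj_conj, dlt_mk_iff] at hs2
          rcases hs2 with h | ⟨he, -⟩
          · exact (oasym r _ _ OP h).elim
          · exact (oirr r _ (he ▸ OP)).elim
    · have hq : q ≠ q.conj := fun e => h3 ⟨pe, e⟩
      rcases trichotomous (r := ord s) q q.conj with OQ | qe | OQ'
      · -- witness A
        refine ⟨⟨r,s,hrs,p,q⟩, ⟨Set.mem_insert _ _, Or.inl hlt, ?_⟩, ?_⟩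
        · simp only [conjComp_mk, dlt_mk_iff]
          exact Or.inr ⟨pe, OQ⟩
        · rintro Y ⟨hmem, hs1, hs2⟩
          simp only [Set.mem_insert_iff, Set.mem_singleton_iff] at hmem
          rcases hmem with rfl | rfl | rfl | rfl
          · rfl
          · exact (uniqTS _ (Or.inl rfl) hs1).elim
          · exact (uniqTS _ (Or.inr rfl) hs1).elim
          · simp only [conjComp_mk, conj_conj, dlt_mk_iff] at hs2
            rcases hs2 with h | ⟨-, hqq⟩
            · rw [← pe] at h
              exact (oirr r p h).elim
            · exact (oasym s _ _ OQ hqq).elim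
      · exact (hq qe).elim
      · -- witness C
        refine ⟨DoublePartition.conjComp ⟨r,s,hrs,p,q⟩,
          ⟨Set.mem_insert_of_mem _ (Set.mem_insert_of_mem _ (Set.mem_insert_of_mem _ rfl)),
            Or.inl hlt, ?_⟩, ?_⟩
        · simp only [conjComp_mk, conj_conj, dlt_mk_iff]
          exact Or.inr ⟨pe.symm, OQ'⟩
        · rintro Y ⟨hmem, hs1, hs2⟩
          simp only [Set.mem_insert_iff, Set.mem_singleton_iff] at hmem
          rcases hmem with rfl | rfl | rfl | rfl
          · simp only [conjComp_mk, dlt_mk_iff] at hs2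
            rcases hs2 with h | ⟨-, hqq⟩
            · rw [← pe] at h
              exact (oirr r p h).elim
            · exact (oasym s _ _ hqq OQ').elim
          · exact (uniqTS _ (Or.inl rfl) hs1).elim
          · exact (uniqTS _ (Or.inr rfl) hs1).elim
          · rfl
    · -- witness C
      refine ⟨DoublePartition.conjComp ⟨r,s,hrs,p,q⟩,
        ⟨Set.mem_insert_of_mem _ (Set.mem_insert_of_mem _ (Set.mem_insert_of_mem _ rfl)),
          Or.inl hlt, ?_⟩, ?_⟩
      · simp only [conjComp_mk, conj_conj, dlt_mk_iff]
        exact Or.inl OP'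
      · rintro Y ⟨hmem, hs1, hs2⟩
        simp only [Set.mem_insert_iff, Set.mem_singleton_iff] at hmem
        rcases hmem with rfl | rfl | rfl | rfl
        · simp only [conjComp_mk, dlt_mk_iff] at hs2
          rcases hs2 with h | ⟨he, -⟩
          · exact (oasym r _ _ h OP').elim
          · rw [← he] at OP'
            exact (oirr r p OP').elim
        · exact (uniqTS _ (Or.inl rfl) hs1).elim
        · exact (uniqTS _ (Or.inr rfl) hs1).elim
        · rfl
  · -- r = s : the core case
    subst heq
    simp only [ne_eq, trans_mk, swap_mk, conjComp_mk,
      dp_mk_eq_iff] at h1 h2 h3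
    have h2' : p ≠ q := fun e => h2 ⟨e, e.symm⟩
    have hpqT : p ≠ q.conj := fun e => h1 ⟨e, by rw [e, conj_conj]⟩
    have hqpT : q ≠ p.conj := fun e => h1 ⟨by rw [e, conj_conj], e⟩
    rcases trichotomous (r := ord r) p q.conj with O1 | pe | O2
    · -- ord p qᵀ : candidates A and C
      have O1' : ord r p.conj q := by
        have hc := hcompat r p q.conj O1 (by rw [conj_conj]; exact h2')
        rwa [conj_conj] at hc
      have refT : ¬ (ord r q.conj p ∨ (q.conj = p ∧ ord r p.conj q)) := by
        rintro (h | ⟨he, -⟩)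
        · exact oasym r _ _ O1 h
        · exact hpqT he.symm
      have refS : ¬ (ord r q p.conj ∨ (q = p.conj ∧ ord r p q.conj)) := by
        rintro (h | ⟨he, -⟩)
        · exact oasym r _ _ O1' h
        · exact hqpT he
      rcases trichotomous (r := ord r) p p.conj with OP | pe2 | OP'
      · -- witness A
        refine ⟨⟨r,r,hrs,p,q⟩, ⟨Set.mem_insert _ _, ?_, ?_⟩, ?_⟩
        · simp only [trans_mk, dlt_mk_iff]
          exact Or.inl O1
        · simp only [conjComp_mk, dlt_mk_iff]
          exact Or.inl OP
        · rintro Y ⟨hmem, hs1, hs2⟩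
          simp only [Set.mem_insert_iff, Set.mem_singleton_iff] at hmem
          rcases hmem with rfl | rfl | rfl | rfl
          · rfl
          · simp only [trans_mk, conj_conj, dlt_mk_iff] at hs1
            exact (refT hs1).elim
          · simp only [swap_mk, trans_mk, dlt_mk_iff] at hs1
            exact (refS hs1).elim
          · simp only [conjComp_mk, conj_conj, dlt_mk_iff] at hs2
            rcases hs2 with h | ⟨he, -⟩
            · exact (oasym r _ _ OP h).elim
            · exact (oirr r _ (he ▸ OP)).elim
      · have hq : q ≠ q.conj := fun e => h3 ⟨pe2, e⟩
        rcases trichotomous (r := ord r) q q.conj with OQ | qe | OQ'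
        · -- witness A
          refine ⟨⟨r,r,hrs,p,q⟩, ⟨Set.mem_insert _ _, ?_, ?_⟩, ?_⟩
          · simp only [trans_mk, dlt_mk_iff]
            exact Or.inl O1
          · simp only [conjComp_mk, dlt_mk_iff]
            exact Or.inr ⟨pe2, OQ⟩
          · rintro Y ⟨hmem, hs1, hs2⟩
            simp only [Set.mem_insert_iff, Set.mem_singleton_iff] at hmem
            rcases hmem with rfl | rfl | rfl | rfl
            · rfl
            · simp only [trans_mk, conj_conj, dlt_mk_iff] at hs1
              exact (refT hs1).elim
            · simp only [swap_mk, trans_mk, dlt_mk_iff] at hs1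
              exact (refS hs1).elim
            · simp only [conjComp_mk, conj_conj, dlt_mk_iff] at hs2
              rcases hs2 with h | ⟨-, hqq⟩
              · rw [← pe2] at h
                exact (oirr r p h).elim
              · exact (oasym r _ _ OQ hqq).elim
        · exact (hq qe).elim
        · -- witness C
          refine ⟨DoublePartition.conjComp ⟨r,r,hrs,p,q⟩,
            ⟨Set.mem_insert_of_mem _ (Set.mem_insert_of_mem _ (Set.mem_insert_of_mem _ rfl)),
              ?_, ?_⟩, ?_⟩
          · simp only [conjComp_mk, trans_mk, conj_conj, dlt_mk_iff]
            exact Or.inl O1'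
          · simp only [conjComp_mk, conj_conj, dlt_mk_iff]
            exact Or.inr ⟨pe2.symm, OQ'⟩
          · rintro Y ⟨hmem, hs1, hs2⟩
            simp only [Set.mem_insert_iff, Set.mem_singleton_iff] at hmem
            rcases hmem with rfl | rfl | rfl | rfl
            · simp only [conjComp_mk, dlt_mk_iff] at hs2
              rcases hs2 with h | ⟨-, hqq⟩
              · rw [← pe2] at h
                exact (oirr r p h).elim
              · exact (oasym r _ _ hqq OQ').elim
            · simp only [trans_mk, conj_conj, dlt_mk_iff] at hs1
              exact (refT hs1).elim
            · simp only [swap_mk, trans_mk, dlt_mk_iff] at hs1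
              exact (refS hs1).elim
            · rfl
      · -- witness C
        refine ⟨DoublePartition.conjComp ⟨r,r,hrs,p,q⟩,
          ⟨Set.mem_insert_of_mem _ (Set.mem_insert_of_mem _ (Set.mem_insert_of_mem _ rfl)),
            ?_, ?_⟩, ?_⟩
        · simp only [conjComp_mk, trans_mk, conj_conj, dlt_mk_iff]
          exact Or.inl O1'
        · simp only [conjComp_mk, conj_conj, dlt_mk_iff]
          exact Or.inl OP'
        · rintro Y ⟨hmem, hs1, hs2⟩
          simp only [Set.mem_insert_iff, Set.mem_singleton_iff] at hmem
          rcases hmem with rfl | rfl | rfl | rfl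
          · simp only [conjComp_mk, dlt_mk_iff] at hs2
            rcases hs2 with h | ⟨he, -⟩
            · exact (oasym r _ _ h OP').elim
            · rw [← he] at OP'
              exact (oirr r p OP').elim
          · simp only [trans_mk, conj_conj, dlt_mk_iff] at hs1
            exact (refT hs1).elim
          · simp only [swap_mk, trans_mk, dlt_mk_iff] at hs1
            exact (refS hs1).elim
          · rfl
    · exact (hpqT pe).elim
    · -- ord qᵀ p : candidates T and S
      have O2' : ord r q p.conj := by
        have hne : q.conj ≠ p.conj := by
          intro e
          have := congrArg Nat.Partition.conj e
          rw [conj_conj, conj_conj] at this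
          exact h2' this.symm
        have hc := hcompat r q.conj p O2 hne
        rwa [conj_conj] at hc
      have refA : ¬ (ord r p q.conj ∨ (p = q.conj ∧ ord r q p.conj)) := by
        rintro (h | ⟨he, -⟩)
        · exact oasym r _ _ O2 h
        · exact hpqT he
      have refC : ¬ (ord r p.conj q ∨ (p.conj = q ∧ ord r q.conj p)) := by
        rintro (h | ⟨he, -⟩)
        · exact oasym r _ _ O2' h
        · exact hqpT he.symm
      rcases trichotomous (r := ord r) q.conj q with OQ | qe | OQ'
      · -- witness T
        refine ⟨DoublePartition.trans ⟨r,r,hrs,p,q⟩,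
          ⟨Set.mem_insert_of_mem _ (Set.mem_insert _ _), ?_, ?_⟩, ?_⟩
        · simp only [trans_mk, conj_conj, dlt_mk_iff]
          exact Or.inl O2
        · simp only [trans_mk, conjComp_mk, conj_conj, dlt_mk_iff]
          exact Or.inl OQ
        · rintro Y ⟨hmem, hs1, hs2⟩
          simp only [Set.mem_insert_iff, Set.mem_singleton_iff] at hmem
          rcases hmem with rfl | rfl | rfl | rfl
          · simp only [trans_mk, dlt_mk_iff] at hs1
            exact (refA hs1).elim
          · rfl
          · simp only [swap_mk, conjComp_mk, dlt_mk_iff] at hs2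
            rcases hs2 with h | ⟨he, -⟩
            · exact (oasym r _ _ OQ h).elim
            · rw [← he] at OQ
              exact (oirr r q OQ).elim
          · simp only [conjComp_mk, trans_mk, conj_conj,
              dlt_mk_iff] at hs1
            exact (refC hs1).elim
      · have hp : p ≠ p.conj := fun e => h3 ⟨e, qe.symm⟩
        rcases trichotomous (r := ord r) p.conj p with OP | pe2 | OP'
        · -- witness T
          refine ⟨DoublePartition.trans ⟨r,r,hrs,p,q⟩,
            ⟨Set.mem_insert_of_mem _ (Set.mem_insert _ _), ?_, ?_⟩, ?_⟩
          · simp only [trans_mk, conj_conj, dlt_mk_iff]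
            exact Or.inl O2
          · simp only [trans_mk, conjComp_mk, conj_conj, dlt_mk_iff]
            exact Or.inr ⟨qe, OP⟩
          · rintro Y ⟨hmem, hs1, hs2⟩
            simp only [Set.mem_insert_iff, Set.mem_singleton_iff] at hmem
            rcases hmem with rfl | rfl | rfl | rfl
            · simp only [trans_mk, dlt_mk_iff] at hs1
              exact (refA hs1).elim
            · rfl
            · simp only [swap_mk, conjComp_mk, dlt_mk_iff] at hs2
              rcases hs2 with h | ⟨-, hpp⟩
              · exact (oirr r _ (qe ▸ h)).elim
              · exact (oasym r _ _ OP hpp).elim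
            · simp only [conjComp_mk, trans_mk, conj_conj,
                dlt_mk_iff] at hs1
              exact (refC hs1).elim
        · exact (hp pe2.symm).elim
        · -- witness S
          refine ⟨DoublePartition.swap ⟨r,r,hrs,p,q⟩,
            ⟨Set.mem_insert_of_mem _ (Set.mem_insert_of_mem _ (Set.mem_insert _ _)), ?_, ?_⟩, ?_⟩
          · simp only [swap_mk, trans_mk, dlt_mk_iff]
            exact Or.inl O2'
          · simp only [swap_mk, conjComp_mk, dlt_mk_iff]
            exact Or.inr ⟨qe.symm, OP'⟩
          · rintro Y ⟨hmem, hs1, hs2⟩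
            simp only [Set.mem_insert_iff, Set.mem_singleton_iff] at hmem
            rcases hmem with rfl | rfl | rfl | rfl
            · simp only [trans_mk, dlt_mk_iff] at hs1
              exact (refA hs1).elim
            · simp only [trans_mk, conjComp_mk, conj_conj,
                dlt_mk_iff] at hs2
              rcases hs2 with h | ⟨-, hpp⟩
              · exact (oirr r _ (qe ▸ h)).elim
              · exact (oasym r _ _ OP' hpp).elim
            · rfl
            · simp only [conjComp_mk, trans_mk, conj_conj,
                dlt_mk_iff] at hs1
              exact (refC hs1).elim
      · -- witness S
        refine ⟨DoublePartition.swap ⟨r,r,hrs,p,q⟩,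
          ⟨Set.mem_insert_of_mem _ (Set.mem_insert_of_mem _ (Set.mem_insert _ _)), ?_, ?_⟩, ?_⟩
        · simp only [swap_mk, trans_mk, dlt_mk_iff]
          exact Or.inl O2'
        · simp only [swap_mk, conjComp_mk, dlt_mk_iff]
          exact Or.inl OQ'
        · rintro Y ⟨hmem, hs1, hs2⟩
          simp only [Set.mem_insert_iff, Set.mem_singleton_iff] at hmem
          rcases hmem with rfl | rfl | rfl | rfl
          · simp only [trans_mk, dlt_mk_iff] at hs1
            exact (refA hs1).elim
          · simp only [trans_mk, conjComp_mk, conj_conj,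
              dlt_mk_iff] at hs2
            rcases hs2 with h | ⟨he, -⟩
            · exact (oasym r _ _ h OQ').elim
            · exact (oirr r _ (he ▸ OQ')).elim
          · rfl
          · simp only [conjComp_mk, trans_mk, conj_conj,
              dlt_mk_iff] at hs1
            exact (refC hs1).elim
  · -- s < r : candidates T and S
    simp only [ne_eq, conjComp_mk, dp_mk_eq_iff] at h3
    have uniqAC : ∀ Y : DoublePartition n,
        Y = (⟨r,s,hrs,p,q⟩ : DoublePartition n) ∨ Y = DoublePartition.conjComp ⟨r,s,hrs,p,q⟩ →
        DoublePartition.dlt ord Y Y.trans → False := by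
      rintro Y (rfl | rfl) hs1 <;>
        simp only [trans_mk, conjComp_mk, conj_conj] at hs1 <;>
        exact not_dlt_mk ord hgt hs1
    rcases trichotomous (r := ord s) q.conj q with OQ | qe | OQ'
    · -- witness T
      refine ⟨DoublePartition.trans ⟨r,s,hrs,p,q⟩,
        ⟨Set.mem_insert_of_mem _ (Set.mem_insert _ _), Or.inl hgt, ?_⟩, ?_⟩
      · simp only [trans_mk, conjComp_mk, conj_conj, dlt_mk_iff]
        exact Or.inl OQ
      · rintro Y ⟨hmem, hs1, hs2⟩
        simp only [Set.mem_insert_iff, Set.mem_singleton_iff] at hmem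
        rcases hmem with rfl | rfl | rfl | rfl
        · exact (uniqAC _ (Or.inl rfl) hs1).elim
        · rfl
        · simp only [swap_mk, conjComp_mk, dlt_mk_iff] at hs2
          rcases hs2 with h | ⟨he, -⟩
          · exact (oasym s _ _ OQ h).elim
          · rw [← he] at OQ
            exact (oirr s q OQ).elim
        · exact (uniqAC _ (Or.inr rfl) hs1).elim
    · have hp : p ≠ p.conj := fun e => h3 ⟨e, qe.symm⟩
      rcases trichotomous (r := ord r) p.conj p with OP | pe | OP'
      · -- witness T
        refine ⟨DoublePartition.trans ⟨r,s,hrs,p,q⟩,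
          ⟨Set.mem_insert_of_mem _ (Set.mem_insert _ _), Or.inl hgt, ?_⟩, ?_⟩
        · simp only [trans_mk, conjComp_mk, conj_conj, dlt_mk_iff]
          exact Or.inr ⟨qe, OP⟩
        · rintro Y ⟨hmem, hs1, hs2⟩
          simp only [Set.mem_insert_iff, Set.mem_singleton_iff] at hmem
          rcases hmem with rfl | rfl | rfl | rfl
          · exact (uniqAC _ (Or.inl rfl) hs1).elim
          · rfl
          · simp only [swap_mk, conjComp_mk, dlt_mk_iff] at hs2
            rcases hs2 with h | ⟨-, hpp⟩
            · exact (oirr s _ (qe ▸ h)).elim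
            · exact (oasym r _ _ OP hpp).elim
          · exact (uniqAC _ (Or.inr rfl) hs1).elim
      · exact (hp pe.symm).elim
      · -- witness S
        refine ⟨DoublePartition.swap ⟨r,s,hrs,p,q⟩,
          ⟨Set.mem_insert_of_mem _ (Set.mem_insert_of_mem _ (Set.mem_insert _ _)),
            Or.inl hgt, ?_⟩, ?_⟩
        · simp only [swap_mk, conjComp_mk, dlt_mk_iff]
          exact Or.inr ⟨qe.symm, OP'⟩
        · rintro Y ⟨hmem, hs1, hs2⟩
          simp only [Set.mem_insert_iff, Set.mem_singleton_iff] at hmem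
          rcases hmem with rfl | rfl | rfl | rfl
          · exact (uniqAC _ (Or.inl rfl) hs1).elim
          · simp only [trans_mk, conjComp_mk, conj_conj,
              dlt_mk_iff] at hs2
            rcases hs2 with h | ⟨-, hpp⟩
            · exact (oirr s _ (qe ▸ h)).elim
            · exact (oasym r _ _ OP' hpp).elim
          · rfl
          · exact (uniqAC _ (Or.inr rfl) hs1).elim
    · -- witness S
      refine ⟨DoublePartition.swap ⟨r,s,hrs,p,q⟩,
        ⟨Set.mem_insert_of_mem _ (Set.mem_insert_of_mem _ (Set.mem_insert _ _)),
          Or.inl hgt, ?_⟩, ?_⟩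
      · simp only [swap_mk, conjComp_mk, dlt_mk_iff]
        exact Or.inl OQ'
      · rintro Y ⟨hmem, hs1, hs2⟩
        simp only [Set.mem_insert_iff, Set.mem_singleton_iff] at hmem
        rcases hmem with rfl | rfl | rfl | rfl
        · exact (uniqAC _ (Or.inl rfl) hs1).elim
        · simp only [trans_mk, conjComp_mk, conj_conj,
            dlt_mk_iff] at hs2
          rcases hs2 with h | ⟨he, -⟩
          · exact (oasym s _ _ h OQ').elim
          · exact (oirr s _ (he ▸ OQ')).elim
        · rfl
        · exact (uniqAC _ (Or.inr rfl) hs1).elim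
end

section
/- For every integer u ≥ 2, the number a(u+1) of standard Young tableaux of square shape (u+1) × (u+1) is strictly greater than twice the number a(u) of standard Young tableaux of square shape u × u: a(u+1) > 2·a(u). -/
/-- The number of standard Young tableaux of square shape `u × u`: bijections from the cells
`Fin u × Fin u` to `Fin (u * u)` that are strictly increasing along every row and every
column. -/
noncomputable def squareSYT (u : ℕ) : ℕ :=
  Nat.card {f : Fin u × Fin u ≃ Fin (u * u) //
    (∀ (i : Fin u) (j j' : Fin u), j < j' → f (i, j) < f (i, j')) ∧
    (∀ (i i' : Fin u) (j : Fin u), i < i' → f (i, j) < f (i', j))}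

namespace SqSYTAux

/-- The subtype of standard Young tableaux of square shape. -/
abbrev S (u : ℕ) := {f : Fin u × Fin u ≃ Fin (u * u) //
    (∀ (i : Fin u) (j j' : Fin u), j < j' → f (i, j) < f (i, j')) ∧
    (∀ (i i' : Fin u) (j : Fin u), i < i' → f (i, j) < f (i', j))}

/-- Value assigned to boundary cell `(i,j)` (with `i = u` or `j = u`) of a
`(u+1) × (u+1)` square, in variant `k`. -/
def bval (k u i j : ℕ) : ℕ :=
  if k = 0 then (if i < u then i else u + j)
  else if k = 1 then (if j < u then j else u + i)
  else (if j < u then 2 * j else if i < u then 2 * i + 1 else 2 * u)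

lemma bval_le (k u i j : ℕ) (hi : i ≤ u) (hj : j ≤ u) :
    bval k u i j ≤ 2 * u := by
  unfold bval; split_ifs <;> omega

lemma sq_succ (u : ℕ) : (u + 1) * (u + 1) = u * u + 2 * u + 1 := by ring

/-- The extension of a filling `f` of the `u × u` square to the `(u+1) × (u+1)` square,
putting the boundary values according to variant `k`. -/
def gfun (u k : ℕ) (f : Fin u × Fin u → Fin (u * u)) :
    Fin (u + 1) × Fin (u + 1) → Fin ((u + 1) * (u + 1)) := fun p =>
  if h : (p.1 : ℕ) < u ∧ (p.2 : ℕ) < u then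
    ⟨(f (⟨p.1, h.1⟩, ⟨p.2, h.2⟩) : ℕ), by
      have := (f (⟨p.1, h.1⟩, ⟨p.2, h.2⟩)).isLt
      rw [sq_succ]; omega⟩
  else
    ⟨u * u + bval k u p.1 p.2, by
      have := bval_le k u p.1 p.2 (Nat.lt_succ_iff.mp p.1.isLt) (Nat.lt_succ_iff.mp p.2.isLt)
      rw [sq_succ]; omega⟩

lemma gfun_interior (u k : ℕ) (f : Fin u × Fin u → Fin (u * u))
    (i j : Fin (u + 1)) (h : (i : ℕ) < u ∧ (j : ℕ) < u) :
    (gfun u k f (i, j) : ℕ) = (f (⟨i, h.1⟩, ⟨j, h.2⟩) : ℕ) := by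
  simp [gfun, h]

lemma gfun_boundary (u k : ℕ) (f : Fin u × Fin u → Fin (u * u))
    (i j : Fin (u + 1)) (h : ¬((i : ℕ) < u ∧ (j : ℕ) < u)) :
    (gfun u k f (i, j) : ℕ) = u * u + bval k u i j := by
  simp [gfun, h]

lemma gfun_injective (u k : ℕ) (f : Fin u × Fin u ≃ Fin (u * u)) :
    Function.Injective (gfun u k ⇑f) := by
  rintro ⟨a, b⟩ ⟨c, d⟩ hpq
  have hval : (gfun u k ⇑f (a, b) : ℕ) = (gfun u k ⇑f (c, d) : ℕ) := by rw [hpq]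
  have hp1 := Nat.lt_succ_iff.mp a.isLt
  have hp2 := Nat.lt_succ_iff.mp b.isLt
  have hq1 := Nat.lt_succ_iff.mp c.isLt
  have hq2 := Nat.lt_succ_iff.mp d.isLt
  by_cases hp : (a : ℕ) < u ∧ (b : ℕ) < u <;>
    by_cases hq : (c : ℕ) < u ∧ (d : ℕ) < u
  · rw [gfun_interior u k f a b hp, gfun_interior u k f c d hq] at hval
    have heq := f.injective (Fin.val_injective hval)
    have h1 : (a : ℕ) = c := congrArg (fun x => (x.1 : ℕ)) heq
    have h2 : (b : ℕ) = d := congrArg (fun x => (x.2 : ℕ)) heq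
    exact Prod.ext (Fin.val_injective h1) (Fin.val_injective h2)
  · rw [gfun_interior u k f a b hp, gfun_boundary u k f c d hq] at hval
    have := (f (⟨a, hp.1⟩, ⟨b, hp.2⟩)).isLt
    omega
  · rw [gfun_boundary u k f a b hp, gfun_interior u k f c d hq] at hval
    have := (f (⟨c, hq.1⟩, ⟨d, hq.2⟩)).isLt
    omega
  · rw [gfun_boundary u k f a b hp, gfun_boundary u k f c d hq] at hval
    have hb : bval k u a b = bval k u c d := by omega
    unfold bval at hb
    have h1 : (a : ℕ) = c ∧ (b : ℕ) = d := by
      split_ifs at hb <;> omega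
    exact Prod.ext (Fin.val_injective h1.1) (Fin.val_injective h1.2)

lemma gfun_bijective (u k : ℕ) (f : Fin u × Fin u ≃ Fin (u * u)) :
    Function.Bijective (gfun u k ⇑f) := by
  rw [Fintype.bijective_iff_injective_and_card]
  refine ⟨gfun_injective u k f, by simp⟩

lemma gfun_row (u k : ℕ) (f : S u) (i j j' : Fin (u + 1)) (hjj' : j < j') :
    gfun u k ⇑f.1 (i, j) < gfun u k ⇑f.1 (i, j') := by
  have hi := Nat.lt_succ_iff.mp i.isLt
  have hj := Nat.lt_succ_iff.mp j.isLt
  have hj' := Nat.lt_succ_iff.mp j'.isLt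
  have hjj : (j : ℕ) < (j' : ℕ) := hjj'
  rw [Fin.lt_iff_val_lt_val]
  by_cases hp : (i : ℕ) < u ∧ (j : ℕ) < u <;>
    by_cases hq : (i : ℕ) < u ∧ (j' : ℕ) < u
  · rw [gfun_interior u k f.1 i j hp, gfun_interior u k f.1 i j' hq]
    exact f.2.1 ⟨i, hp.1⟩ ⟨j, hp.2⟩ ⟨j', hq.2⟩ hjj
  · rw [gfun_interior u k f.1 i j hp, gfun_boundary u k f.1 i j' hq]
    have := (f.1 (⟨i, hp.1⟩, ⟨j, hp.2⟩)).isLt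
    omega
  · omega
  · rw [gfun_boundary u k f.1 i j hp, gfun_boundary u k f.1 i j' hq]
    have hiu : (i : ℕ) = u := by omega
    unfold bval
    split_ifs <;> omega

lemma gfun_col (u k : ℕ) (f : S u) (i i' j : Fin (u + 1)) (hii' : i < i') :
    gfun u k ⇑f.1 (i, j) < gfun u k ⇑f.1 (i', j) := by
  have hi := Nat.lt_succ_iff.mp i.isLt
  have hi' := Nat.lt_succ_iff.mp i'.isLt
  have hj := Nat.lt_succ_iff.mp j.isLt
  have hii : (i : ℕ) < (i' : ℕ) := hii'
  rw [Fin.lt_iff_val_lt_val]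
  by_cases hp : (i : ℕ) < u ∧ (j : ℕ) < u <;>
    by_cases hq : (i' : ℕ) < u ∧ (j : ℕ) < u
  · rw [gfun_interior u k f.1 i j hp, gfun_interior u k f.1 i' j hq]
    exact f.2.2 ⟨i, hp.1⟩ ⟨i', hq.1⟩ ⟨j, hp.2⟩ hii
  · rw [gfun_interior u k f.1 i j hp, gfun_boundary u k f.1 i' j hq]
    have := (f.1 (⟨i, hp.1⟩, ⟨j, hp.2⟩)).isLt
    omega
  · omega
  · rw [gfun_boundary u k f.1 i j hp, gfun_boundary u k f.1 i' j hq]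
    have hju : (j : ℕ) = u := by omega
    unfold bval
    split_ifs <;> omega

/-- The extension map `Fin 3 × S u → S (u+1)`. -/
noncomputable def ext (u : ℕ) (p : Fin 3 × S u) : S (u + 1) :=
  ⟨Equiv.ofBijective (gfun u p.1 ⇑p.2.1) (gfun_bijective u p.1 p.2.1),
    fun i j j' h => gfun_row u p.1 p.2 i j j' h,
    fun i i' j h => gfun_col u p.1 p.2 i i' j h⟩

lemma ext_apply (u : ℕ) (p : Fin 3 × S u) (q : Fin (u + 1) × Fin (u + 1)) :
    (ext u p).1 q = gfun u p.1 ⇑p.2.1 q := rfl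

lemma ext_injective (u : ℕ) (hu : 2 ≤ u) : Function.Injective (ext u) := by
  intro ⟨k, f⟩ ⟨k', f'⟩ h
  have hq : ∀ q, gfun u k ⇑f.1 q = gfun u k' ⇑f'.1 q := by
    intro q
    rw [← ext_apply u (k, f) q, ← ext_apply u (k', f') q, h]
  -- First: k = k', by evaluating at the boundary cell (0, u).
  have hcell : ¬(((0 : Fin (u + 1)) : ℕ) < u ∧ ((Fin.last u : Fin (u + 1)) : ℕ) < u) := by
    simp [Fin.last]
  have h0u := congrArg Fin.val (hq (0, Fin.last u))
  rw [gfun_boundary u k ⇑f.1 _ _ hcell, gfun_boundary u k' ⇑f'.1 _ _ hcell] at h0u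
  simp only [Fin.val_zero, Fin.val_last] at h0u
  have hb : bval k u 0 u = bval k' u 0 u := by omega
  have hkk' : k = k' := by
    apply Fin.val_injective
    have hk := k.isLt
    have hk' := k'.isLt
    unfold bval at hb
    split_ifs at hb <;> omega
  subst hkk'
  -- Second: f = f', by evaluating at interior cells.
  have hf : f = f' := by
    apply Subtype.ext
    apply Equiv.ext
    intro ⟨i, j⟩
    have hint : ((⟨(i : ℕ), i.isLt.trans (Nat.lt_succ_self u)⟩ : Fin (u + 1)) : ℕ) < u ∧
        ((⟨(j : ℕ), j.isLt.trans (Nat.lt_succ_self u)⟩ : Fin (u + 1)) : ℕ) < u :=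
      ⟨i.isLt, j.isLt⟩
    have := congrArg Fin.val
      (hq (⟨(i : ℕ), i.isLt.trans (Nat.lt_succ_self u)⟩,
           ⟨(j : ℕ), j.isLt.trans (Nat.lt_succ_self u)⟩))
    rw [gfun_interior u k ⇑f.1 _ _ hint, gfun_interior u k ⇑f'.1 _ _ hint] at this
    exact Fin.val_injective this
  subst hf
  rfl

/-- The standard row-by-row tableau shows `S u` is nonempty. -/
noncomputable instance instNonemptyS (u : ℕ) : Nonempty (S u) := by
  refine ⟨⟨finProdFinEquiv, ?_, ?_⟩⟩
  · intro i j j' hjj'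
    have : (j : ℕ) < (j' : ℕ) := hjj'
    simp only [Fin.lt_iff_val_lt_val, finProdFinEquiv_apply_val]
    omega
  · intro i i' j hii'
    have h1 : (i : ℕ) < (i' : ℕ) := hii'
    have h2 : (j : ℕ) < u := j.isLt
    simp only [Fin.lt_iff_val_lt_val, finProdFinEquiv_apply_val]
    have : u * (i : ℕ) + u ≤ u * (i' : ℕ) := by
      calc u * (i : ℕ) + u = u * ((i : ℕ) + 1) := by ring
      _ ≤ u * (i' : ℕ) := Nat.mul_le_mul_left u h1
    omega

end SqSYTAux

/-- For every `u ≥ 2`, the number of standard Young tableaux of square shape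
`(u+1) × (u+1)` is more than twice the number of those of shape `u × u`. -/
theorem squareSYT_succ_gt_two_mul (u : ℕ) (hu : 2 ≤ u) :
    squareSYT (u + 1) > 2 * squareSYT u := by
  have hle : Nat.card (Fin 3 × SqSYTAux.S u) ≤ Nat.card (SqSYTAux.S (u + 1)) :=
    Nat.card_le_card_of_injective _ (SqSYTAux.ext_injective u hu)
  have hcard : Nat.card (Fin 3 × SqSYTAux.S u) = 3 * Nat.card (SqSYTAux.S u) := by
    simp [Nat.card_prod]
  have hpos : 0 < Nat.card (SqSYTAux.S u) := Nat.card_pos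
  have e1 : squareSYT u = Nat.card (SqSYTAux.S u) := rfl
  have e2 : squareSYT (u + 1) = Nat.card (SqSYTAux.S (u + 1)) := rfl
  omega
end

section
/- Let u > w ≥ 1 be integers, set r = u², s = w² and n = r + s, and assume n ≥ 13. Then 2 · a(u) · a(w) · C(n, r) · (r − s)² > 4·n², where C(n, r) is the binomial coefficient. (Equivalently, with n_λ = C(n,r)·a(u)·a(w), n_1 = C(n−1, r−1)·a(u)·a(w) and n_2 = C(n−1, r)·a(u)·a(w), one has (n_1/2)(n_1/2 − 1) + (n_2/2)(n_2/2 − 1) > (1/2)(n_λ/2)(n_λ/2 − 1).) -/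
lemma squareSYT_pos (u : ℕ) : 0 < squareSYT u := by
  have hne : Nonempty {f : Fin u × Fin u ≃ Fin (u * u) //
      (∀ (i : Fin u) (j j' : Fin u), j < j' → f (i, j) < f (i, j')) ∧
      (∀ (i i' : Fin u) (j : Fin u), i < i' → f (i, j) < f (i', j))} := by
    refine ⟨⟨finProdFinEquiv, ?_, ?_⟩⟩
    · intro i j j' h
      simp only [finProdFinEquiv, Equiv.coe_fn_mk, Fin.lt_def, Fin.mk_lt_mk] at *
      omega
    · intro i i' j h
      simp only [finProdFinEquiv, Equiv.coe_fn_mk, Fin.lt_def, Fin.mk_lt_mk] at *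
      have hj : (j : ℕ) < u := j.isLt
      have : u * ((i : ℕ) + 1) ≤ u * (i' : ℕ) := Nat.mul_le_mul_left u h
      have : u * (i : ℕ) + u ≤ u * (i' : ℕ) := by rw [Nat.mul_add] at this; omega
      omega
  exact Nat.card_pos

lemma choose_two_le_aux (n : ℕ) : ∀ s, 2 ≤ s → s ≤ n / 2 → n.choose 2 ≤ n.choose s := by
  intro s
  induction s with
  | zero => omega
  | succ k ih =>
    intro h2 hle
    rcases Nat.eq_or_lt_of_le h2 with h | h
    · rw [← h]
    · have hk2 : 2 ≤ k := by omega
      exact (ih hk2 (by omega)).trans (Nat.choose_le_succ_of_lt_half_left (by omega))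

lemma arith1 (n : ℕ) (h : 13 ≤ n) : 2 * n * (n - 2) ^ 2 > 4 * n ^ 2 := by
  obtain ⟨m, rfl⟩ : ∃ m, n = m + 13 := ⟨n - 13, by omega⟩
  have h2 : m + 13 - 2 = m + 11 := by omega
  rw [h2]
  nlinarith []

lemma arith2 (n : ℕ) (h : 13 ≤ n) : 4 * n ^ 2 < 25 * (n * (n - 1)) := by
  obtain ⟨m, rfl⟩ : ∃ m, n = m + 13 := ⟨n - 13, by omega⟩
  have h1 : m + 13 - 1 = m + 12 := by omega
  rw [h1]
  nlinarith []

/-- For `u > w ≥ 1` with `r = u²`, `s = w²`, `n = r + s ≥ 13`, one has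
`2 · a(u) · a(w) · C(n, r) · (r − s)² > 4 n²`. -/
theorem squareSYT_sylow_inequality (u w : ℕ) (hw : 1 ≤ w) (huw : w < u)
    (r s n : ℕ) (hr : r = u ^ 2) (hs : s = w ^ 2) (hn : n = r + s) (hn13 : 13 ≤ n) :
    2 * squareSYT u * squareSYT w * Nat.choose n r * (r - s) ^ 2 > 4 * n ^ 2 := by
  have hau : 1 ≤ squareSYT u := squareSYT_pos u
  have haw : 1 ≤ squareSYT w := squareSYT_pos w
  have hsr : s < r := by
    have : w ^ 2 < u ^ 2 := Nat.pow_lt_pow_left huw (by norm_num)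
    omega
  have hrn : r ≤ n := by omega
  have hsym : Nat.choose n r = Nat.choose n s := by
    have : s = n - r := by omega
    rw [this, Nat.choose_symm hrn]
  -- lower bound on r - s
  have hrs : 2 * w + 1 ≤ r - s := by
    have h1 : w + 1 ≤ u := huw
    have h2 : (w + 1) ^ 2 ≤ u ^ 2 := Nat.pow_le_pow_left h1 2
    have h3 : (w + 1) ^ 2 = w ^ 2 + 2 * w + 1 := by ring
    omega
  -- key: 2 * C(n,r) * (r-s)^2 > 4 * n^2
  have key : 2 * Nat.choose n r * (r - s) ^ 2 > 4 * n ^ 2 := by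
    rcases Nat.eq_or_lt_of_le hw with h1 | h2
    · -- w = 1 : s = 1, r = n - 1
      have hs1 : s = 1 := by rw [hs, ← h1]; norm_num
      have hrn1 : r = n - 1 := by omega
      have hc : Nat.choose n r = n := by
        rw [hsym, hs1, Nat.choose_one_right]
      have hrsn : r - s = n - 2 := by omega
      rw [hc, hrsn]
      exact arith1 n hn13
    · -- w ≥ 2 : s ≥ 4, C(n,s) ≥ C(n,2) = n(n-1)/2, r - s ≥ 5
      have hs4 : 4 ≤ s := by
        have : 2 ^ 2 ≤ w ^ 2 := Nat.pow_le_pow_left h2 2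
        omega
      have hsh : s ≤ n / 2 := by omega
      have hc2 : Nat.choose n 2 ≤ Nat.choose n s := choose_two_le_aux n s (by omega) hsh
      have hc2v : Nat.choose n 2 = n * (n - 1) / 2 := Nat.choose_two_right n
      have hd : n * (n - 1) / 2 * 2 = n * (n - 1) := by
        rw [Nat.div_mul_cancel]
        exact Nat.even_mul_pred_self n |>.two_dvd
      have hrs5 : 5 ≤ r - s := by omega
      have h25 : 25 ≤ (r - s) ^ 2 := by nlinarith
      have hdvd : 2 ∣ n * (n - 1) := (Nat.even_mul_pred_self n).two_dvd
      have h2c : n * (n - 1) ≤ 2 * Nat.choose n s := by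
        have h := Nat.mul_le_mul_left 2 hc2
        rwa [hc2v, Nat.mul_div_cancel' hdvd] at h
      rw [hsym]
      calc 4 * n ^ 2 < 25 * (n * (n - 1)) := arith2 n hn13
        _ ≤ 25 * (2 * Nat.choose n s) := Nat.mul_le_mul_left 25 h2c
        _ = 2 * Nat.choose n s * 25 := by ring
        _ ≤ 2 * Nat.choose n s * (r - s) ^ 2 := Nat.mul_le_mul_left _ h25
  calc 4 * n ^ 2 < 2 * Nat.choose n r * (r - s) ^ 2 := key
    _ ≤ 2 * squareSYT u * squareSYT w * Nat.choose n r * (r - s) ^ 2 := by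
        have : 2 ≤ 2 * squareSYT u * squareSYT w := by nlinarith
        exact Nat.mul_le_mul (Nat.mul_le_mul_right _ this) (le_refl _)
end

section
/- Let F be a finite field of square cardinality q, and let ε : F → F be its automorphism of order 2 (x ↦ x^{√q}), with fixed subfield F_0 of cardinality √q. Let G be a group and ρ : G → GL_r(F) a group homomorphism that is absolutely irreducible, i.e., the F-linear span of the image ρ(G) is the full matrix algebra of r×r matrices over F. Suppose ρ is isomorphic to ε ∘ ρ*, i.e., there exists P ∈ GL_r(F) such that P ρ(g) P⁻¹ equals the matrix obtained by applying ε entrywise to the transpose of ρ(g)⁻¹, for every g ∈ G. Then there exists S ∈ GL_r(F) such that for every g ∈ G the matrix N = S⁻¹ ρ(g) S satisfies (N^ε)ᵀ · N = 1 (where N^ε applies ε to every entry), i.e., S⁻¹ ρ(G) S is contained in the general unitary group GU_r(√q). -/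
open Matrix
open scoped MatrixGroups


theorem herm_aux {F : Type*} [Field F] [StarRing F]
    (hne : ∃ a : F, star a ≠ a)
    (hnorm : ∀ c : F, star c = c → ∃ μ : F, star μ * μ = c) :
    ∀ (N : ℕ) (n : Type) [Fintype n] [DecidableEq n], Fintype.card n = N →
      ∀ (H : Matrix n n F), Hᴴ = H → IsUnit H.det →
      ∃ S : Matrix n n F, IsUnit S.det ∧ Sᴴ * H * S = 1 := by
  intro N
  induction N with
  | zero =>
    intro n _ _ hcn H _ _
    haveI : IsEmpty n := Fintype.card_eq_zero_iff.mp hcn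
    exact ⟨1, by simp, Subsingleton.elim _ _⟩
  | succ N ih =>
    intro n _ _ hcn H hH hdet
    have hnonempty : Nonempty n := Fintype.card_pos_iff.mp (by omega)
    have hherm : ∀ i l : n, star (H i l) = H l i := by
      intro i l
      conv_rhs => rw [← hH]
      rfl
    -- step 1 : an anisotropic vector exists
    have hexv : ∃ v : n → F, star v ⬝ᵥ H.mulVec v ≠ 0 := by
      by_contra hc
      push_neg at hc
      have h2 : ∀ u w : n → F,
          star u ⬝ᵥ H.mulVec w + star w ⬝ᵥ H.mulVec u = 0 := by
        intro u w
        have e : star (u + w) ⬝ᵥ H.mulVec (u + w)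
            = star u ⬝ᵥ H.mulVec u +
              (star u ⬝ᵥ H.mulVec w + star w ⬝ᵥ H.mulVec u) +
              star w ⬝ᵥ H.mulVec w := by
          rw [star_add, Matrix.mulVec_add, add_dotProduct, dotProduct_add,
            dotProduct_add]
          ring
        rw [hc, hc u, hc w] at e
        linear_combination -e
      have h3 : ∀ u w : n → F, star u ⬝ᵥ H.mulVec w = 0 := by
        intro u w
        obtain ⟨a, ha⟩ := hne
        have e1 := h2 u w
        have e2 := h2 (a • u) w
        have e2' : star a * (star u ⬝ᵥ H.mulVec w)
            + a * (star w ⬝ᵥ H.mulVec u) = 0 := by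
          simpa [star_smul, smul_dotProduct, Matrix.mulVec_smul, dotProduct_smul,
            smul_eq_mul, mul_comm, mul_left_comm] using e2
        have key : (star a - a) * (star u ⬝ᵥ H.mulVec w) = 0 := by
          linear_combination e2' - a * e1
        rcases mul_eq_zero.mp key with h | h
        · exact absurd (sub_eq_zero.mp h) ha
        · exact h
      have hH0 : H = 0 := by
        ext j k
        have := h3 (Pi.single j 1) (Pi.single k 1)
        simpa [dotProduct, Matrix.mulVec, Pi.single_apply, apply_ite (star : F → F),
          ite_mul, mul_ite, Finset.sum_ite_eq, Finset.sum_ite_eq'] using this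
      rw [hH0, Matrix.det_zero] at hdet
      exact not_isUnit_zero hdet
    obtain ⟨v, hv⟩ := hexv
    -- step 2 : normalize the value to 1
    have expand : ∀ (u w : n → F),
        star u ⬝ᵥ H.mulVec w = ∑ i, ∑ l, star (u i) * H i l * w l := by
      intro u w
      simp [dotProduct, Matrix.mulVec, Finset.mul_sum, mul_assoc]
    have hcfix : star (star v ⬝ᵥ H.mulVec v) = star v ⬝ᵥ H.mulVec v := by
      rw [expand]
      calc star (∑ i, ∑ l, star (v i) * H i l * v l)
          = ∑ i, ∑ l, v i * H l i * star (v l) := by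
            rw [star_sum]
            refine Finset.sum_congr rfl fun i _ => ?_
            rw [star_sum]
            refine Finset.sum_congr rfl fun l _ => ?_
            rw [star_mul', star_mul', star_star, hherm]
        _ = ∑ l, ∑ i, v i * H l i * star (v l) := Finset.sum_comm
        _ = ∑ i, ∑ l, star (v i) * H i l * v l := by
            refine Finset.sum_congr rfl fun l _ => ?_
            refine Finset.sum_congr rfl fun i _ => ?_
            ring
    obtain ⟨μ, hμ⟩ := hnorm (star v ⬝ᵥ H.mulVec v)⁻¹
      (by rw [star_inv₀, hcfix])
    set v' : n → F := μ • v with hv'def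
    have hBv' : star v' ⬝ᵥ H.mulVec v' = 1 := by
      rw [hv'def, star_smul, smul_dotProduct, Matrix.mulVec_smul, dotProduct_smul,
        smul_eq_mul, smul_eq_mul, ← mul_assoc, hμ, inv_mul_cancel₀ hv]
    have hv'ne : ∃ i, v' i ≠ 0 := by
      by_contra hall
      push_neg at hall
      have : v' = 0 := funext hall
      rw [this] at hBv'
      simp at hBv'
    obtain ⟨i, hvi⟩ := hv'ne
    -- step 3 : T with column i equal to v'
    set T : Matrix n n F := (1 : Matrix n n F).updateCol i v' with hTdef
    have hTdet : T.det = v' i := by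
      rw [hTdef, ← Matrix.cramer_apply, Matrix.cramer_one]
      rfl
    have hTisU : IsUnit T.det := by rw [hTdet]; exact isUnit_iff_ne_zero.mpr hvi
    have hTcol : ∀ j, T j i = v' j := by
      intro j; simp [hTdef, Matrix.updateCol_apply]
    -- generic entry computation
    have conj_entry : ∀ (A X Y : Matrix n n F) (a b : n),
        (Xᴴ * A * Y) a b = star (fun j => X j a) ⬝ᵥ A.mulVec fun k => Y k b := by
      intro A X Y a b
      simp only [Matrix.mul_apply, Matrix.conjTranspose_apply, dotProduct,
        Matrix.mulVec, Pi.star_apply, Finset.sum_mul, Finset.mul_sum]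
      rw [Finset.sum_comm]
      exact Finset.sum_congr rfl fun j _ => Finset.sum_congr rfl fun k _ => by ring
    have conj3 : ∀ (A X : Matrix n n F), Aᴴ = A → (Xᴴ * A * X)ᴴ = Xᴴ * A * X := by
      intro A X hA
      rw [Matrix.conjTranspose_mul, Matrix.conjTranspose_mul,
        Matrix.conjTranspose_conjTranspose, hA]
      noncomm_ring
    set H1 : Matrix n n F := Tᴴ * H * T with hH1def
    have hH1 : H1ᴴ = H1 := by rw [hH1def]; exact conj3 H T hH
    have hH1det : IsUnit H1.det := by
      rw [hH1def, Matrix.det_mul, Matrix.det_mul, Matrix.det_conjTranspose]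
      exact (hTisU.star.mul hdet).mul hTisU
    have hH1ii : H1 i i = 1 := by
      rw [hH1def, conj_entry]
      have : (fun j => T j i) = v' := funext hTcol
      rw [this]
      exact hBv'
    have hherm1 : ∀ a b : n, star (H1 a b) = H1 b a := by
      intro a b
      conv_rhs => rw [← hH1]
      rfl
    -- step 4 : clear row and column i
    set w : n → F := fun j => if j = i then 1 else -(H1 i j) with hwdef
    have hwi : w i = 1 := by simp [hwdef]
    set U : Matrix n n F := (1 : Matrix n n F).updateRow i w with hUdef
    have hUdet : U.det = 1 := by
      rw [hUdef, ← Matrix.det_transpose, ← Matrix.updateCol_transpose,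
        Matrix.transpose_one, ← Matrix.cramer_apply, Matrix.cramer_one]
      exact hwi
    have hUisU : IsUnit U.det := by rw [hUdet]; exact isUnit_one
    have hUsplit : ∀ k b, U k b = (1 : Matrix n n F) k b
        + if k = i then w b - (1 : Matrix n n F) i b else 0 := by
      intro k b
      rw [hUdef, Matrix.updateRow_apply]
      by_cases hk : k = i
      · subst hk; simp
      · simp [hk]
    have hUcoli : ∀ j, U j i = (1 : Matrix n n F) j i := by
      intro j
      rw [hUsplit]
      by_cases hj : j = i
      · subst hj; simp [hwi]
      · simp [hj]
    set H2 : Matrix n n F := Uᴴ * H1 * U with hH2def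
    have hH2 : H2ᴴ = H2 := by rw [hH2def]; exact conj3 H1 U hH1
    have hH2det : IsUnit H2.det := by
      rw [hH2def, Matrix.det_mul, Matrix.det_mul, Matrix.det_conjTranspose]
      exact (hUisU.star.mul hH1det).mul hUisU
    have hH2i : ∀ b, H2 i b = if b = i then 1 else 0 := by
      intro b
      have hrow : H2 i b = (H1 * U) i b := by
        rw [hH2def, Matrix.mul_assoc, Matrix.mul_apply]
        have hU' : ∀ j, Uᴴ i j = (1 : Matrix n n F) i j := by
          intro j
          rw [Matrix.conjTranspose_apply, hUcoli]
          by_cases hj : j = i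
          · subst hj; simp
          · simp [Matrix.one_apply, hj, Ne.symm hj]
        calc ∑ j, Uᴴ i j * (H1 * U) j b
            = ∑ j, (1 : Matrix n n F) i j * (H1 * U) j b := by
              exact Finset.sum_congr rfl fun j _ => by rw [hU']
          _ = ((1 : Matrix n n F) * (H1 * U)) i b := (Matrix.mul_apply).symm
          _ = (H1 * U) i b := by rw [Matrix.one_mul]
      rw [hrow, Matrix.mul_apply]
      have : ∀ k, H1 i k * U k b = H1 i k * (1 : Matrix n n F) k b
          + (if k = i then H1 i k * (w b - (1 : Matrix n n F) i b) else 0) := by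
        intro k
        rw [hUsplit, mul_add]
        by_cases hk : k = i
        · subst hk; simp
        · simp [hk]
      rw [Finset.sum_congr rfl fun k _ => this k, Finset.sum_add_distrib,
        Finset.sum_ite_eq' Finset.univ i fun k => H1 i k * (w b - (1 : Matrix n n F) i b)]
      have e1 : ∑ k, H1 i k * (1 : Matrix n n F) k b = H1 i b := by
        rw [← Matrix.mul_apply, Matrix.mul_one]
      rw [e1]
      simp only [Finset.mem_univ, if_true, hH1ii, one_mul]
      by_cases hb : b = i
      · subst hb; simp [hwi, hH1ii]
      · simp [hb, hwdef, Matrix.one_apply, Ne.symm hb]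
    have hH2ci : ∀ a, H2 a i = if a = i then 1 else 0 := by
      intro a
      have : H2 a i = star (H2 i a) := by
        conv_lhs => rw [← hH2]
        rfl
      rw [this, hH2i]
      by_cases ha : a = i <;> simp [ha]
    -- step 5 : reindex and induct
    haveI : DecidablePred (fun a : n => a = i) := fun a => decEq a i
    set e : {a : n // a = i} ⊕ {a : n // ¬ a = i} ≃ n := Equiv.sumCompl (· = i)
      with hedef
    haveI hsub : Subsingleton {a : n // a = i} :=
      ⟨fun x y => Subtype.ext (x.prop.trans y.prop.symm)⟩
    set K : Matrix {a : n // ¬ a = i} {a : n // ¬ a = i} F :=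
      Matrix.of (fun x y => H2 x.1 y.1) with hKdef
    have hM : H2.submatrix e e = Matrix.fromBlocks 1 0 0 K := by
      ext a b
      cases a with
      | inl x =>
        cases b with
        | inl y =>
          have hx : (e (Sum.inl x) : n) = i := x.prop
          have hy : (e (Sum.inl y) : n) = i := y.prop
          have hxy : x = y := Subsingleton.elim x y
          simp only [Matrix.submatrix_apply, hx, hy, Matrix.fromBlocks_apply₁₁]
          rw [hH2i]
          simp [hxy, Matrix.one_apply]
        | inr y =>
          have hx : (e (Sum.inl x) : n) = i := x.prop
          have hy : ¬ (e (Sum.inr y) : n) = i := y.prop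
          simp only [Matrix.submatrix_apply, hx, Matrix.fromBlocks_apply₁₂]
          rw [hH2i]
          simp [hy]
      | inr x =>
        cases b with
        | inl y =>
          have hy : (e (Sum.inl y) : n) = i := y.prop
          have hx : ¬ (e (Sum.inr x) : n) = i := x.prop
          simp only [Matrix.submatrix_apply, hy, Matrix.fromBlocks_apply₂₁]
          rw [hH2ci]
          simp [hx]
        | inr y =>
          simp [hKdef, Matrix.submatrix_apply, Matrix.fromBlocks_apply₂₂, hedef]
    have hdetsub : (H2.submatrix e e).det = H2.det :=
      Matrix.det_submatrix_equiv_self e H2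
    have hKdet : IsUnit K.det := by
      rw [hM, Matrix.det_fromBlocks_zero₂₁, Matrix.det_one, one_mul] at hdetsub
      rw [hdetsub]
      exact hH2det
    have hKherm : Kᴴ = K := by
      ext x y
      rw [Matrix.conjTranspose_apply, hKdef]
      show star (H2 y.1 x.1) = H2 x.1 y.1
      conv_rhs => rw [← hH2]
      rfl
    have hcard2 : Fintype.card {a : n // ¬ a = i} = N := by
      have h1 : Fintype.card ({a : n // a = i} ⊕ {a : n // ¬ a = i})
          = Fintype.card n := Fintype.card_congr e
      rw [Fintype.card_sum, Fintype.card_subtype_eq, hcn] at h1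
      omega
    obtain ⟨S0, hS0det, hS0⟩ := ih {a : n // ¬ a = i} hcard2 K hKherm hKdet
    set W : Matrix ({a : n // a = i} ⊕ {a : n // ¬ a = i})
        ({a : n // a = i} ⊕ {a : n // ¬ a = i}) F :=
      Matrix.fromBlocks 1 0 0 S0 with hWdef
    have hWprod : Wᴴ * (H2.submatrix e e) * W = 1 := by
      rw [hM, hWdef, Matrix.fromBlocks_conjTranspose, Matrix.fromBlocks_multiply,
        Matrix.fromBlocks_multiply]
      simp only [Matrix.conjTranspose_zero, Matrix.conjTranspose_one,
        Matrix.mul_zero, Matrix.zero_mul, Matrix.mul_one, Matrix.one_mul,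
        add_zero, zero_add]
      rw [hS0, Matrix.fromBlocks_one]
    have hWdet : IsUnit W.det := by
      rw [hWdef, Matrix.det_fromBlocks_zero₂₁, Matrix.det_one, one_mul]
      exact hS0det
    set Ws : Matrix n n F := W.submatrix e.symm e.symm with hWsdef
    have hWsdet : IsUnit Ws.det := by
      rw [hWsdef, Matrix.det_submatrix_equiv_self e.symm]
      exact hWdet
    refine ⟨T * U * Ws, ?_, ?_⟩
    · rw [Matrix.det_mul, Matrix.det_mul]
      exact (hTisU.mul hUisU).mul hWsdet
    · have hconj : (T * U * Ws)ᴴ * H * (T * U * Ws) = Wsᴴ * H2 * Ws := by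
        rw [hH2def, hH1def]
        simp only [Matrix.conjTranspose_mul]
        noncomm_ring
      rw [hconj]
      have hH2back : H2 = (H2.submatrix e e).submatrix e.symm e.symm := by
        rw [Matrix.submatrix_submatrix]
        have : (e : _ → n) ∘ (e.symm : n → _) = id := funext fun x => e.apply_symm_apply x
        rw [this, Matrix.submatrix_id_id]
      rw [hWsdef, Matrix.conjTranspose_submatrix, hH2back,
        Matrix.submatrix_mul_equiv Wᴴ (H2.submatrix e e) e.symm e.symm e.symm,
        Matrix.submatrix_mul_equiv _ W e.symm e.symm e.symm,
        hWprod, Matrix.submatrix_one_equiv]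


lemma my_card_units {F : Type*} [Field F] [Fintype F] : Nat.card Fˣ = Fintype.card F - 1 := by
  classical
  rw [Nat.card_eq_fintype_card, Fintype.card_units]

lemma my_fact {m : ℕ} (hm : 2 ≤ m) : m * m - 1 = (m - 1) * (m + 1) := by
  obtain ⟨k, rfl⟩ : ∃ k, m = k + 2 := ⟨m - 2, by omega⟩
  apply Nat.sub_eq_of_eq_add
  show (k+2) * (k+2) = (k+1) * (k+3) + 1
  ring

lemma exists_pow_ne (F : Type*) [Field F] [Fintype F] (m : ℕ) (hm : 2 ≤ m)
    (hcard : Fintype.card F = m * m) : ∃ a : F, a ^ m ≠ a := by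
  obtain ⟨ζ, hζ⟩ := IsCyclic.exists_generator (α := Fˣ)
  have hord : orderOf ζ = m * m - 1 := by
    rw [orderOf_eq_card_of_forall_mem_zpowers hζ, my_card_units, hcard]
  refine ⟨(ζ : F), fun h => ?_⟩
  have hu : ζ ^ m = ζ := Units.ext (by rw [Units.val_pow_eq_pow_val, h])
  have h1 : ζ ^ (m - 1) * ζ = ζ := by
    rw [← pow_succ]
    have e : m - 1 + 1 = m := by omega
    rw [e, hu]
  have h2 : ζ ^ (m - 1) = 1 :=
    mul_right_cancel (b := ζ) (by rw [h1, one_mul])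
  have hdvd : orderOf ζ ∣ m - 1 := orderOf_dvd_of_pow_eq_one h2
  rw [hord] at hdvd
  have hle : m * m - 1 ≤ m - 1 := Nat.le_of_dvd (by omega) hdvd
  have h3 : m + 1 ≤ m * m := by nlinarith
  obtain ⟨q, hq⟩ : ∃ q, m * m = q := ⟨_, rfl⟩
  rw [hq] at hle h3
  omega

lemma exists_norm_factor (F : Type*) [Field F] [Fintype F] (m : ℕ) (hm : 2 ≤ m)
    (hcard : Fintype.card F = m * m) (c : F) (hc : c ^ m = c) :
    ∃ μ : F, μ ^ m * μ = c := by
  by_cases hc0 : c = 0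
  · exact ⟨0, by simp [hc0, zero_pow (by omega : m ≠ 0)]⟩
  obtain ⟨ζ, hζ⟩ := IsCyclic.exists_generator (α := Fˣ)
  have hord : orderOf ζ = m * m - 1 := by
    rw [orderOf_eq_card_of_forall_mem_zpowers hζ, my_card_units, hcard]
  set u : Fˣ := Units.mk0 c hc0 with hudef
  obtain ⟨a, ha⟩ := mem_powers_iff_mem_zpowers.mpr (hζ u)
  have ha' : ζ ^ a = u := ha
  have hum : u ^ m = u := Units.ext (by rw [Units.val_pow_eq_pow_val]; exact hc)
  have h1 : ζ ^ (a * m) = ζ ^ a := by rw [pow_mul, ha', hum]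
  have hsplit : a * m = a + a * (m - 1) := by
    obtain ⟨k, rfl⟩ : ∃ k, m = k + 2 := ⟨m - 2, by omega⟩
    show a * (k + 2) = a + a * (k + 1)
    ring
  have h2 : ζ ^ (a * (m - 1)) = 1 := by
    rw [hsplit, pow_add] at h1
    exact mul_left_cancel (h1.trans (mul_one _).symm)
  have hdvd : m * m - 1 ∣ a * (m - 1) := hord ▸ orderOf_dvd_of_pow_eq_one h2
  rw [my_fact hm, mul_comm a (m - 1)] at hdvd
  obtain ⟨t, ht⟩ := (Nat.mul_dvd_mul_iff_left (by omega : 0 < m - 1)).mp hdvd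
  refine ⟨(ζ ^ t : Fˣ), ?_⟩
  have e1 : ((ζ ^ t : Fˣ) : F) ^ m * ((ζ ^ t : Fˣ) : F) = (((ζ ^ t) ^ m * ζ ^ t : Fˣ) : F) := by
    push_cast; ring
  have e2 : (ζ ^ t) ^ m * ζ ^ t = ζ ^ a := by
    rw [← pow_mul, ← pow_add, ht]
    congr 1
    ring
  rw [e1, e2, ha']
  rfl

lemma exists_lam_factor (F : Type*) [Field F] [Fintype F] (m : ℕ) (hm : 2 ≤ m)
    (hcard : Fintype.card F = m * m) (lam : F) (hl : lam ^ m * lam = 1) :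
    ∃ μ : F, μ ≠ 0 ∧ μ ^ m * lam = μ := by
  have hlam0 : lam ≠ 0 := by
    intro h; rw [h] at hl; simp [zero_pow (by omega : m ≠ 0)] at hl
  obtain ⟨ζ, hζ⟩ := IsCyclic.exists_generator (α := Fˣ)
  have hord : orderOf ζ = m * m - 1 := by
    rw [orderOf_eq_card_of_forall_mem_zpowers hζ, my_card_units, hcard]
  set u : Fˣ := Units.mk0 lam hlam0 with hudef
  obtain ⟨a, ha⟩ := mem_powers_iff_mem_zpowers.mpr (hζ u)
  have ha' : ζ ^ a = u := ha
  have hum : u ^ m * u = 1 := Units.ext (by push_cast; exact hl)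
  have h1 : ζ ^ (a * m + a) = 1 := by rw [pow_add, pow_mul, ha', hum]
  have hdvd : m * m - 1 ∣ a * m + a := hord ▸ orderOf_dvd_of_pow_eq_one h1
  have hsum : a * m + a = a * (m + 1) := by ring
  rw [hsum, my_fact hm, mul_comm (m-1) (m+1), mul_comm a (m+1)] at hdvd
  obtain ⟨t, ht⟩ := (Nat.mul_dvd_mul_iff_left (by omega : 0 < m + 1)).mp hdvd
  have hlamU : (ζ ^ t) ^ (m - 1) = u := by
    rw [← pow_mul, mul_comm t (m - 1), ← ht, ha']
  have hlam : ((ζ ^ t : Fˣ) : F) ^ (m - 1) = lam := by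
    have := congrArg Units.val hlamU
    rw [Units.val_pow_eq_pow_val] at this
    exact this
  refine ⟨(((ζ ^ t)⁻¹ : Fˣ) : F), Units.ne_zero _, ?_⟩
  rw [Units.val_inv_eq_inv_val, ← hlam]
  set x : F := ((ζ ^ t : Fˣ) : F) with hxdef
  have hx0 : x ≠ 0 := Units.ne_zero _
  obtain ⟨k, hk⟩ : ∃ k, m = k + 2 := ⟨m - 2, by omega⟩
  subst hk
  show x⁻¹ ^ (k + 1 + 1) * x ^ (k + 1) = x⁻¹
  rw [pow_succ x⁻¹ (k+1), mul_comm (x⁻¹ ^ (k+1)) x⁻¹, mul_assoc, ← mul_pow,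
    inv_mul_cancel₀ hx0, one_pow, mul_one]

/-- If an absolutely irreducible representation `ρ : G → GL_r(F)` over a finite field `F` of
square cardinality `q = m²` satisfies `ρ ≃ ε ∘ ρ*`, where `ε : x ↦ x^m` is the automorphism
of `F` of order `2`, then `ρ` can be conjugated into the general unitary group
`GU_r(√q) = {M : (M^ε)ᵀ M = 1}`. -/
theorem conj_into_unitary_of_iso_eps_dual
    (F : Type*) [Field F] [Fintype F] (m : ℕ) (hcard : Fintype.card F = m * m)
    (G : Type*) [Group G] (r : ℕ) (ρ : G →* GL (Fin r) F)
    (habsirr : Submodule.span F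
        (Set.range (fun g : G => (ρ g : Matrix (Fin r) (Fin r) F))) =
      (⊤ : Submodule F (Matrix (Fin r) (Fin r) F)))
    (P : GL (Fin r) F)
    (hiso : ∀ g : G, ((P * ρ g * P⁻¹ : GL (Fin r) F) : Matrix (Fin r) (Fin r) F) =
      (((ρ g)⁻¹ : Matrix (Fin r) (Fin r) F).transpose).map (· ^ m)) :
    ∃ S : GL (Fin r) F, ∀ g : G,
      (((S⁻¹ * ρ g * S : GL (Fin r) F) : Matrix (Fin r) (Fin r) F).map (· ^ m)).transpose *
        ((S⁻¹ * ρ g * S : GL (Fin r) F) : Matrix (Fin r) (Fin r) F) = 1 := by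
  -- trivial case r = 0
  rcases Nat.eq_zero_or_pos r with hr | hr
  · subst hr
    haveI : Subsingleton (Matrix (Fin 0) (Fin 0) F) :=
      ⟨fun A B => by ext i; exact absurd i.2 (by omega)⟩
    exact ⟨1, fun g => Subsingleton.elim _ _⟩
  -- basic numerology
  have hm2 : 2 ≤ m := by
    have h1 : 1 < Fintype.card F := Fintype.one_lt_card
    rw [hcard] at h1
    by_contra h
    push_neg at h
    interval_cases m <;> omega
  -- the Frobenius-type automorphism x ↦ x ^ m
  set p : ℕ := ringChar F with hpdef
  haveI hp1 : CharP F p := ringChar.charP F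
  obtain ⟨n0, hpprime, hcard'⟩ := FiniteField.card F p
  haveI : Fact p.Prime := ⟨hpprime⟩
  have hm_dvd : m ∣ p ^ (n0 : ℕ) := by
    rw [← hcard', hcard]; exact dvd_mul_right m m
  obtain ⟨k, hk_le, hkm⟩ := (Nat.dvd_prime_pow hpprime).mp hm_dvd
  have hadd : ∀ x y : F, (x + y) ^ m = x ^ m + y ^ m := by
    intro x y
    rw [hkm]
    exact add_pow_char_pow x y p k
  letI starF : StarRing F :=
    { star := fun x => x ^ m
      star_involutive := fun x => by
        show (x ^ m) ^ m = x
        rw [← pow_mul, ← hcard]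
        exact FiniteField.pow_card x
      star_mul := fun a b => by
        show (a * b) ^ m = b ^ m * a ^ m
        rw [mul_pow, mul_comm]
      star_add := fun a b => hadd a b }
  have hne : ∃ a : F, star a ≠ a := exists_pow_ne F m hm2 hcard
  have hnorm : ∀ c : F, star c = c → ∃ μ : F, star μ * μ = c := fun c hc =>
    exists_norm_factor F m hm2 hcard c hc
  -- conjTranspose conversion
  have hmapT : ∀ M : Matrix (Fin r) (Fin r) F, (M.map (· ^ m)).transpose = Mᴴ := by
    intro M; ext i j; rfl
  -- move to the unit group of the matrix ring
  set MF := Matrix (Fin r) (Fin r) F with hMFdef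
  let u : G → MFˣ := fun g => ρ g
  let Pu : MFˣ := P
  -- the invariance equation at the level of units
  have hiso' : ∀ g, star (u g) * Pu * u g = Pu := by
    intro g
    apply Units.ext
    have h0 := hiso g
    have hval : ((P * ρ g * P⁻¹ : GL (Fin r) F) : Matrix (Fin r) (Fin r) F)
        = (Pu : MF) * (u g : MF) * ((Pu⁻¹ : MFˣ) : MF) := rfl
    rw [hval] at h0
    have hval2 : (((ρ g : Matrix (Fin r) (Fin r) F))⁻¹.transpose).map (· ^ m)
        = ((star (u g) : MFˣ) : MF)⁻¹ := by
      rw [Matrix.transpose_map, hmapT]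
      show ((u g : MF))⁻¹ᴴ = ((u g : MF))ᴴ⁻¹
      exact Matrix.conjTranspose_nonsing_inv _
    rw [hval2] at h0
    -- h0 : ↑Pu * ↑(u g) * ↑(Pu⁻¹) = (↑(star (u g)))⁻¹
    -- turn the nonsing inverses into unit inverses
    have h1 : (Pu * u g * Pu⁻¹ : MFˣ) = ((star (u g) : MFˣ))⁻¹ := by
      apply Units.ext
      calc ((Pu * u g * Pu⁻¹ : MFˣ) : MF)
          = (Pu : MF) * (u g : MF) * ((Pu⁻¹ : MFˣ) : MF) := by
            rw [Units.val_mul, Units.val_mul]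
        _ = ((((star (u g) : MFˣ)) : MF))⁻¹ := h0
        _ = (((star (u g))⁻¹ : MFˣ) : MF) := (Matrix.coe_units_inv (star (u g))).symm
    -- from h1 : Pu * u g * Pu⁻¹ = (star (u g))⁻¹ derive star u * Pu * u = Pu
    have h2 : star (u g) * (Pu * u g * Pu⁻¹) = 1 := by rw [h1, mul_inv_cancel]
    calc ((star (u g) * Pu * u g : MFˣ) : MF) = ((star (u g) * Pu * u g * Pu⁻¹ * Pu : MFˣ) : MF) := by
          congr 1
          group
      _ = ((Pu : MFˣ) : MF) := by
          congr 1
          calc star (u g) * Pu * u g * Pu⁻¹ * Pu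
              = star (u g) * (Pu * u g * Pu⁻¹) * Pu := by group
            _ = 1 * Pu := by rw [h2]
            _ = Pu := one_mul Pu
  -- conjugate-transposed invariance
  have hiso2 : ∀ g, star (u g) * star Pu * u g = star Pu := by
    intro g
    calc star (u g) * star Pu * u g
        = star (star (u g) * Pu * u g) := by
          rw [StarMul.star_mul, StarMul.star_mul, star_star]
          group
      _ = star Pu := by rw [hiso' g]
  -- the commutant element
  set A : MFˣ := Pu⁻¹ * star Pu with hAdef
  have hcommA : ∀ g, (A : MFˣ) * u g = u g * A := by
    intro g
    have h1 : star (u g) = Pu * (u g)⁻¹ * Pu⁻¹ := by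
      calc star (u g) = (star (u g) * Pu * u g) * (u g)⁻¹ * Pu⁻¹ := by group
        _ = Pu * (u g)⁻¹ * Pu⁻¹ := by rw [hiso' g]
    have h2 : star (u g) = star Pu * (u g)⁻¹ * (star Pu)⁻¹ := by
      calc star (u g) = (star (u g) * star Pu * u g) * (u g)⁻¹ * (star Pu)⁻¹ := by group
        _ = star Pu * (u g)⁻¹ * (star Pu)⁻¹ := by rw [hiso2 g]
    have h3 : Pu * (u g)⁻¹ * Pu⁻¹ = star Pu * (u g)⁻¹ * (star Pu)⁻¹ :=
      h1.symm.trans h2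
    have h4 : (u g)⁻¹ * A = A * (u g)⁻¹ := by
      rw [hAdef]
      calc (u g)⁻¹ * (Pu⁻¹ * star Pu)
          = Pu⁻¹ * (Pu * (u g)⁻¹ * Pu⁻¹) * star Pu := by group
        _ = Pu⁻¹ * (star Pu * (u g)⁻¹ * (star Pu)⁻¹) * star Pu := by rw [h3]
        _ = (Pu⁻¹ * star Pu) * (u g)⁻¹ := by group
    calc A * u g = u g * ((u g)⁻¹ * A) * u g := by group
      _ = u g * (A * (u g)⁻¹) * u g := by rw [h4]
      _ = u g * A := by group
  -- Schur: A is scalar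
  have hspan : ∀ M : MF, (A : MF) * M = M * (A : MF) := by
    intro M
    have hM : M ∈ Submodule.span F
        (Set.range fun g : G => ((ρ g : Matrix (Fin r) (Fin r) F))) := by
      rw [habsirr]; exact Submodule.mem_top
    refine Submodule.span_induction ?_ ?_ ?_ ?_ hM
    · rintro x ⟨g, rfl⟩
      have := congrArg (Units.val) (hcommA g)
      rw [Units.val_mul, Units.val_mul] at this
      exact this
    · simp
    · intro x y _ _ hx hy
      rw [mul_add, add_mul, hx, hy]
    · intro a x _ hx
      rw [mul_smul_comm, smul_mul_assoc, hx]
  obtain ⟨lam, hlam⟩ : ∃ lam : F, (A : MF) = lam • (1 : MF) := by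
    have hcomm : Pairwise fun i j : Fin r =>
        Commute (Matrix.single i j (1 : F)) (A : MF) := by
      intro i j _
      exact (hspan _).symm
    obtain ⟨lam, hlam⟩ := Matrix.mem_range_scalar_of_commute_single hcomm
    refine ⟨lam, ?_⟩
    rw [← hlam]
    ext i j
    rw [Matrix.scalar_apply, Matrix.diagonal_apply,
      show ((lam • (1 : MF)) i j) = lam * (1 : Matrix (Fin r) (Fin r) F) i j from rfl,
      Matrix.one_apply]
    split <;> simp
  -- P† = lam • P
  have hPm : ((star Pu : MFˣ) : MF) = (Pu : MF)ᴴ := rfl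
  have hPH : (Pu : MF)ᴴ = lam • (Pu : MF) := by
    have h5 : (Pu : MFˣ) * A = star Pu := by rw [hAdef]; group
    have := congrArg (Units.val) h5
    rw [Units.val_mul, hlam] at this
    rw [← hPm, ← this]
    rw [mul_smul_comm, mul_one]
  -- lam ^ m * lam = 1
  have hPne : ∃ i j, (Pu : MF) i j ≠ 0 := by
    by_contra hall
    push_neg at hall
    have h0 : (Pu : MF) = 0 := by ext i j; exact hall i j
    have h1 := Pu.mul_inv
    rw [h0, zero_mul] at h1
    haveI : Nonempty (Fin r) := ⟨⟨0, hr⟩⟩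
    have := congrFun (congrFun h1 ⟨0, hr⟩) ⟨0, hr⟩
    change (0 : F) = 1 at this
    exact one_ne_zero this.symm
  have hlamnorm : lam ^ m * lam = 1 := by
    obtain ⟨i, j, hij⟩ := hPne
    have h6 : (Pu : MF) = (star lam * lam) • (Pu : MF) := by
      conv_lhs => rw [← Matrix.conjTranspose_conjTranspose (Pu : MF)]
      rw [hPH, Matrix.conjTranspose_smul, hPH, smul_smul]
    have h7 := congrFun (congrFun h6 i) j
    rw [Matrix.smul_apply, smul_eq_mul] at h7
    have h8 : (star lam * lam) = 1 := by
      apply mul_right_cancel₀ hij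
      rw [one_mul, ← h7]
    exact h8
  -- the Hermitian invariant form Q
  obtain ⟨μ, hμ0, hμ⟩ := exists_lam_factor F m hm2 hcard lam hlamnorm
  set Q : MF := μ • (Pu : MF) with hQdef
  have hQherm : Qᴴ = Q := by
    rw [hQdef, Matrix.conjTranspose_smul, hPH, smul_smul]
    show (μ ^ m * lam) • (Pu : MF) = μ • (Pu : MF)
    rw [hμ]
  have hPdet : IsUnit (Pu : MF).det := (Matrix.isUnit_iff_isUnit_det _).mp ⟨Pu, rfl⟩
  have hQdet : IsUnit Q.det := by
    rw [hQdef, Matrix.det_smul]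
    exact (isUnit_iff_ne_zero.mpr (pow_ne_zero _ hμ0)).mul hPdet
  have hQinv : ∀ g, ((u g : MF))ᴴ * Q * (u g : MF) = Q := by
    intro g
    have this : ((u g : MF))ᴴ * (Pu : MF) * (u g : MF) = (Pu : MF) := by
      have h := congrArg (Units.val) (hiso' g)
      rw [Units.val_mul, Units.val_mul] at h
      exact h
    rw [hQdef]
    calc ((u g : MF))ᴴ * (μ • (Pu : MF)) * (u g : MF)
        = μ • (((u g : MF))ᴴ * (Pu : MF) * (u g : MF)) := by
          rw [mul_smul_comm, smul_mul_assoc]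
      _ = μ • (Pu : MF) := by
          rw [show ((u g : MF))ᴴ * (Pu : MF) * (u g : MF) = (Pu : MF) from this]
  -- classify the Hermitian form
  obtain ⟨S0, hS0det, hS0⟩ := herm_aux hne hnorm (Fintype.card (Fin r)) (Fin r) rfl
    Q hQherm hQdet
  have hS0unit : IsUnit S0 := (Matrix.isUnit_iff_isUnit_det S0).mpr hS0det
  refine ⟨hS0unit.unit, ?_⟩
  intro g
  set Su : MFˣ := hS0unit.unit with hSudef
  have hSuval : (Su : MF) = S0 := hS0unit.unit_spec
  rw [hmapT]
  -- reduce coercions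
  have hNval : ((Su⁻¹ * ρ g * Su : GL (Fin r) F) : Matrix (Fin r) (Fin r) F)
      = S0⁻¹ * (u g : MF) * S0 := by
    show ((Su⁻¹ * u g * Su : MFˣ) : MF) = S0⁻¹ * (u g : MF) * S0
    rw [Units.val_mul, Units.val_mul, Matrix.coe_units_inv, hSuval]
  rw [hNval]
  -- final computation
  have hS0inv : S0⁻¹ * S0 = 1 := Matrix.nonsing_inv_mul S0 hS0det
  have hS0inv' : S0 * S0⁻¹ = 1 := Matrix.mul_nonsing_inv S0 hS0det
  have hQeq : (S0ᴴ)⁻¹ * S0⁻¹ = Q := by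
    have h9 : IsUnit (S0ᴴ).det := by
      rw [Matrix.det_conjTranspose]; exact hS0det.star
    have h10 : (S0ᴴ)⁻¹ * (S0ᴴ * Q * S0) * S0⁻¹ = (S0ᴴ)⁻¹ * 1 * S0⁻¹ := by rw [hS0]
    rw [mul_one] at h10
    rw [← h10]
    calc (S0ᴴ)⁻¹ * (S0ᴴ * Q * S0) * S0⁻¹
        = ((S0ᴴ)⁻¹ * S0ᴴ) * Q * (S0 * S0⁻¹) := by noncomm_ring
      _ = Q := by rw [Matrix.nonsing_inv_mul _ h9, hS0inv', one_mul, mul_one]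
  calc (S0⁻¹ * (u g : MF) * S0)ᴴ * (S0⁻¹ * (u g : MF) * S0)
      = S0ᴴ * ((u g : MF)ᴴ * ((S0⁻¹)ᴴ * S0⁻¹ * (u g : MF))) * S0 := by
        rw [Matrix.conjTranspose_mul, Matrix.conjTranspose_mul]
        noncomm_ring
    _ = S0ᴴ * ((u g : MF)ᴴ * (Q * (u g : MF))) * S0 := by
        rw [Matrix.conjTranspose_nonsing_inv, hQeq]
    _ = S0ᴴ * Q * S0 := by
        rw [show (u g : MF)ᴴ * (Q * (u g : MF)) = (u g : MF)ᴴ * Q * (u g : MF) from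
          (mul_assoc _ _ _).symm, hQinv g]
    _ = 1 := hS0
end

section
/- Let F be a finite field of square cardinality q, and let ε : F → F be its automorphism of order 2 (x ↦ x^{√q}), with fixed subfield F_0 of cardinality √q. Let G be a group and ρ : G → GL_r(F) a group homomorphism that is absolutely irreducible, i.e., the F-linear span of the image ρ(G) is the full matrix algebra of r×r matrices over F. Suppose ρ is isomorphic to ε ∘ ρ, i.e., there exists P ∈ GL_r(F) such that P ρ(g) P⁻¹ equals the matrix obtained by applying ε entrywise to ρ(g), for every g ∈ G. Then there exists S ∈ GL_r(F) such that for every g ∈ G all entries of S⁻¹ ρ(g) S lie in the subfield F_0, i.e., S⁻¹ ρ(G) S ⊆ GL_r(F_0). -/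
open Matrix
open scoped MatrixGroups

lemma aux_exists_pow_succ {F : Type*} [Field F] [Fintype F] [DecidableEq F] {m : ℕ} (hm : 2 ≤ m)
    (hcard : Fintype.card F = m * m) (c : Fˣ) (hc : c ^ m = c) :
    ∃ l : Fˣ, l ^ (m + 1) = c := by
  obtain ⟨g, hg⟩ := IsCyclic.exists_generator (α := Fˣ)
  obtain ⟨n, hn⟩ : ∃ n : ℕ, g ^ n = c := (mem_powers_iff_mem_zpowers (x := g)).mpr (hg c)
  have horder : orderOf g = m * m - 1 := by
    rw [orderOf_eq_card_of_forall_mem_zpowers hg, Nat.card_eq_fintype_card,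
      Fintype.card_units, hcard]
  have hc1 : c ^ (m - 1) = 1 := by
    have h : c ^ (m - 1) * c = 1 * c := by
      rw [one_mul, ← pow_succ, Nat.sub_add_cancel (by omega), hc]
    exact mul_right_cancel h
  have hfac : m * m - 1 = (m + 1) * (m - 1) := by
    rcases Nat.exists_eq_add_of_le hm with ⟨k, rfl⟩
    have h1 : 2 + k - 1 = k + 1 := by omega
    have h2 : (2 + k) * (2 + k) = (2 + k + 1) * (k + 1) + 1 := by ring
    rw [h1]
    omega
  have hdvd : (m + 1) * (m - 1) ∣ n * (m - 1) := by
    have h2 : orderOf g ∣ n * (m - 1) := orderOf_dvd_of_pow_eq_one (by rw [pow_mul, hn, hc1])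
    rwa [horder, hfac] at h2
  have hdvd' : (m + 1) ∣ n := (Nat.mul_dvd_mul_iff_right (by omega : 0 < m - 1)).mp hdvd
  refine ⟨g ^ (n / (m + 1)), ?_⟩
  rw [← pow_mul, Nat.div_mul_cancel hdvd', hn]

/-- If an absolutely irreducible representation `ρ : G → GL_r(F)` over a finite field `F` of
square cardinality `q = m²` satisfies `ρ ≃ ε ∘ ρ`, where `ε : x ↦ x^m` is the automorphism
of `F` of order `2`, then `ρ` can be conjugated into `GL_r(F_0)`, `F_0` being the fixed
subfield of `ε` (of cardinality `√q`). -/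
theorem conj_into_subfield_of_iso_eps_self
    (F : Type*) [Field F] [Fintype F] (m : ℕ) (hcard : Fintype.card F = m * m)
    (G : Type*) [Group G] (r : ℕ) (ρ : G →* GL (Fin r) F)
    (habsirr : Submodule.span F
        (Set.range (fun g : G => (ρ g : Matrix (Fin r) (Fin r) F))) =
      (⊤ : Submodule F (Matrix (Fin r) (Fin r) F)))
    (P : GL (Fin r) F)
    (hiso : ∀ g : G, ((P * ρ g * P⁻¹ : GL (Fin r) F) : Matrix (Fin r) (Fin r) F) =
      ((ρ g : Matrix (Fin r) (Fin r) F)).map (· ^ m)) :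
    ∃ S : GL (Fin r) F, ∀ (g : G) (i j : Fin r),
      ((S⁻¹ * ρ g * S : GL (Fin r) F) : Matrix (Fin r) (Fin r) F) i j ^ m =
        ((S⁻¹ * ρ g * S : GL (Fin r) F) : Matrix (Fin r) (Fin r) F) i j := by
  classical
  rcases Nat.eq_zero_or_pos r with hr | hr
  · exact ⟨1, fun g i j => absurd i.2 (by omega)⟩
  -- basic numerology
  have hm2 : 2 ≤ m := by
    by_contra h
    interval_cases m <;> simp_all <;> exact absurd hcard (by
      have := Fintype.one_lt_card (α := F); omega)
  -- the field automorphism ε : x ↦ x ^ m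
  set p := ringChar F with hp
  haveI hcp : CharP F p := ringChar.charP F
  obtain ⟨np, hpp, hcardp⟩ := FiniteField.card F p
  haveI : Fact p.Prime := ⟨hpp⟩
  haveI : ExpChar F p := ExpChar.prime hpp
  obtain ⟨a, -, hma⟩ : ∃ a, a ≤ (np : ℕ) ∧ m = p ^ a := by
    have hdvd : m ∣ p ^ (np : ℕ) := by
      rw [← hcardp, hcard]; exact Dvd.intro m rfl
    exact (Nat.dvd_prime_pow hpp).mp hdvd
  set ε : F →+* F := iterateFrobenius F p a with hεdef
  have hε : ∀ x : F, ε x = x ^ m := fun x => by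
    rw [hεdef, iterateFrobenius_def, hma]
  have hεε : ∀ x : F, ε (ε x) = x := fun x => by
    rw [hε, hε, ← pow_mul, ← hcard, FiniteField.pow_card]
  -- the induced automorphism of GL
  set φ : GL (Fin r) F →* GL (Fin r) F :=
    Units.map (ε.mapMatrix : Matrix (Fin r) (Fin r) F →+* Matrix (Fin r) (Fin r) F).toMonoidHom
    with hφdef
  have hφval : ∀ A : GL (Fin r) F, (φ A : Matrix (Fin r) (Fin r) F) =
      (A : Matrix (Fin r) (Fin r) F).map ε := fun A => rfl
  have hφφ : ∀ A : GL (Fin r) F, φ (φ A) = A := by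
    intro A
    ext i j
    simp [hφval, Matrix.map_apply, hεε]
  -- hiso in terms of φ
  have hiso' : ∀ g : G, φ (ρ g) = P * ρ g * P⁻¹ := by
    intro g
    ext i j
    rw [hφval, hiso g]
    simp [Matrix.map_apply, hε]
  -- Q = P^ε * P commutes with all ρ g
  set Q : GL (Fin r) F := φ P * P with hQdef
  have hQconj : ∀ g : G, ρ g = Q * ρ g * Q⁻¹ := by
    intro g
    conv_lhs => rw [← hφφ (ρ g), hiso' g]
    rw [_root_.map_mul, _root_.map_mul, map_inv, hiso' g, hQdef, _root_.mul_inv_rev]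
    group
  have hQcomm : ∀ g : G, Q * ρ g = ρ g * Q := by
    intro g
    calc Q * ρ g = (Q * ρ g * Q⁻¹) * Q := by group
    _ = ρ g * Q := by rw [← hQconj g]
  -- Q commutes with every matrix
  have hQall : ∀ M : Matrix (Fin r) (Fin r) F,
      (Q : Matrix (Fin r) (Fin r) F) * M = M * (Q : Matrix (Fin r) (Fin r) F) := by
    have hle : Submodule.span F (Set.range (fun g : G => (ρ g : Matrix (Fin r) (Fin r) F))) ≤
        Subalgebra.toSubmodule (Subalgebra.centralizer F {(Q : Matrix (Fin r) (Fin r) F)}) := by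
      rw [Submodule.span_le]
      rintro M ⟨g, rfl⟩
      intro x hx
      rcases hx with rfl
      exact congrArg Units.val (hQcomm g)
    rw [habsirr] at hle
    intro M
    exact hle (Submodule.mem_top : M ∈ ⊤) (Q : Matrix (Fin r) (Fin r) F) rfl
  -- hence Q is scalar
  obtain ⟨c, hc⟩ : (Q : Matrix (Fin r) (Fin r) F) ∈ Set.range (Matrix.scalar (Fin r)) := by
    apply Matrix.mem_range_scalar_of_commute_single
    intro i j _
    exact (hQall (Matrix.single i j 1)).symm
  haveI : Nonempty (Fin r) := ⟨⟨0, hr⟩⟩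
  have hc0 : c ≠ 0 := by
    intro h
    have h1 : (Q : Matrix (Fin r) (Fin r) F) * (Q⁻¹ : GL (Fin r) F) = 1 := Q.mul_inv
    rw [← hc, h, map_zero, zero_mul] at h1
    exact one_ne_zero (congrFun (congrFun h1.symm ⟨0, hr⟩) ⟨0, hr⟩)
  -- Q is fixed by φ, hence c is fixed by ε
  have hPφP : P * φ P = φ P * P := by
    have h1 : Q * P = P * Q := Units.ext (hQall (P : Matrix (Fin r) (Fin r) F))
    rw [hQdef] at h1
    have := mul_right_cancel (a := φ P * P) (b := P) (c := P * φ P) (by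
      rw [mul_assoc] at h1 ⊢; rw [h1]; group)
    rw [this]
  have hφQ : φ Q = Q := by
    rw [hQdef, _root_.map_mul, hφφ, ← hPφP]
  have hεc : ε c = c := by
    have h1 : (Q : Matrix (Fin r) (Fin r) F).map ε = (Q : Matrix (Fin r) (Fin r) F) :=
      congrArg Units.val hφQ
    rw [← hc, Matrix.scalar_apply, Matrix.diagonal_map (map_zero ε)] at h1
    have h2 := congrFun (congrFun h1 ⟨0, hr⟩) ⟨0, hr⟩
    simpa [Matrix.diagonal_apply_eq, Matrix.scalar_apply] using h2
  -- normalize P by a scalar so that (φ P') * P' = 1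
  set cu : Fˣ := Units.mk0 c hc0 with hcudef
  have hcum : cu⁻¹ ^ m = cu⁻¹ := by
    have h : cu ^ m = cu := Units.ext (by
      push_cast
      show c ^ m = c
      rw [← hε c, hεc])
    rw [inv_pow, h]
  obtain ⟨l, hl⟩ := aux_exists_pow_succ hm2 hcard cu⁻¹ hcum
  set sc : Fˣ →* GL (Fin r) F := Units.map (Matrix.scalar (Fin r)).toMonoidHom with hscdef
  have hscval : ∀ x : Fˣ, (sc x : Matrix (Fin r) (Fin r) F) = Matrix.scalar (Fin r) (x : F) :=
    fun x => rfl
  have hsccomm : ∀ (x : Fˣ) (u : GL (Fin r) F), sc x * u = u * sc x := by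
    intro x u
    exact Units.ext (Matrix.scalar_commute (x : F) (fun r' => mul_comm _ _)
      (u : Matrix (Fin r) (Fin r) F))
  have hφsc : ∀ x : Fˣ, φ (sc x) = sc (Units.map ε.toMonoidHom x) := by
    intro x
    refine Units.ext ?_
    show (Matrix.scalar (Fin r) (x : F)).map ε = Matrix.scalar (Fin r) (ε (x : F))
    rw [Matrix.scalar_apply, Matrix.scalar_apply, Matrix.diagonal_map (map_zero ε)]
  have hεul : Units.map ε.toMonoidHom l = l ^ m := Units.ext (by
    push_cast
    exact hε (l : F))
  have hQsc : Q = sc cu := Units.ext (by rw [hscval]; exact hc.symm)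
  set P' : GL (Fin r) F := sc l * P with hP'def
  have hφP'P' : φ P' * P' = 1 := by
    rw [hP'def, _root_.map_mul, hφsc, hεul]
    calc sc (l ^ m) * φ P * (sc l * P)
        = sc (l ^ m) * (φ P * sc l) * P := by group
      _ = sc (l ^ m) * (sc l * φ P) * P := by rw [hsccomm l (φ P)]
      _ = sc (l ^ m) * sc l * (φ P * P) := by group
      _ = sc (l ^ m * l) * Q := by rw [_root_.map_mul, hQdef]
      _ = sc (l ^ m * l * cu) := by rw [hQsc, _root_.map_mul sc (l ^ m * l) cu, _root_.map_mul sc (l ^ m) l]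
      _ = 1 := by
          have h : l ^ m * l * cu = 1 := by
            rw [← pow_succ, hl, inv_mul_cancel]
          rw [h, _root_.map_one]
  have hφP' : φ P' = P'⁻¹ := eq_inv_of_mul_eq_one_left hφP'P'
  have hP'φP' : P' * φ P' = 1 := by rw [hφP', mul_inv_cancel]
  have hiso'' : ∀ g : G, φ (ρ g) = P' * ρ g * P'⁻¹ := by
    intro g
    rw [hiso' g, hP'def, _root_.mul_inv_rev]
    calc P * ρ g * P⁻¹
        = sc l * (sc l)⁻¹ * (P * ρ g * P⁻¹) := by group
      _ = sc l * (P * ρ g * P⁻¹) * (sc l)⁻¹ := by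
          rw [mul_assoc (sc l), hsccomm l (P * ρ g * P⁻¹)]; group
      _ = sc l * P * ρ g * (P⁻¹ * (sc l)⁻¹) := by group
  -- the semilinear involution on F^r
  set u : (Fin r → F) → (Fin r → F) :=
    fun v => ((P'⁻¹ : GL (Fin r) F) : Matrix (Fin r) (Fin r) F).mulVec (fun i => ε (v i))
    with hudef
  have hεmulVec : ∀ (A : Matrix (Fin r) (Fin r) F) (v : Fin r → F),
      (fun i => ε (A.mulVec v i)) = (A.map ε).mulVec (fun i => ε (v i)) := by
    intro A v
    funext i
    simp [Matrix.mulVec, dotProduct, map_sum, Matrix.map_apply]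
  have hmapinv : ((P'⁻¹ : GL (Fin r) F) : Matrix (Fin r) (Fin r) F).map ε =
      (P' : Matrix (Fin r) (Fin r) F) := by
    have h : φ (P'⁻¹) = P' := by rw [map_inv, hφP', inv_inv]
    rw [← hφval]
    exact congrArg Units.val h
  have huu : ∀ v, u (u v) = v := by
    intro v
    rw [hudef]
    simp only
    rw [hεmulVec, hmapinv]
    have h2 : (fun i => ε (ε (v i))) = v := funext fun i => hεε (v i)
    rw [h2, Matrix.mulVec_mulVec, Units.inv_mul, Matrix.one_mulVec]
  have hu_add : ∀ v w, u (v + w) = u v + u w := by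
    intro v w
    rw [hudef]
    simp only
    rw [show (fun i => ε ((v + w) i)) = (fun i => ε (v i)) + (fun i => ε (w i)) from
      funext fun i => by simp, Matrix.mulVec_add]
  have hu_smul : ∀ (t : F) v, u (t • v) = ε t • u v := by
    intro t v
    rw [hudef]
    simp only
    rw [show (fun i => ε ((t • v) i)) = ε t • (fun i => ε (v i)) from
      funext fun i => by simp, Matrix.mulVec_smul]
  -- there is an element not fixed by ε
  obtain ⟨μ, hμ⟩ : ∃ μ : F, ε μ ≠ μ := by
    by_contra h
    push_neg at h
    have hall : ∀ x : F, x ^ m = x := fun x => by rw [← hε x, h x]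
    set q : Polynomial F := Polynomial.X ^ m - Polynomial.X with hq
    have hq0 : q ≠ 0 := by
      intro h0
      have h1 := congrArg (fun pp => Polynomial.coeff pp m) h0
      rw [hq] at h1
      simp only [Polynomial.coeff_sub, Polynomial.coeff_X_pow, Polynomial.coeff_X,
        Polynomial.coeff_zero, if_pos rfl, if_neg (by omega : ¬ (1 = m))] at h1
      simp at h1
    have hroots : (Finset.univ : Finset F) ⊆ q.roots.toFinset := by
      intro x _
      rw [Multiset.mem_toFinset, Polynomial.mem_roots hq0]
      simp [hq, Polynomial.IsRoot, hall x]
    have h1 : Fintype.card F ≤ Multiset.card q.roots := by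
      rw [← Finset.card_univ]
      exact le_trans (Finset.card_le_card hroots) (Multiset.toFinset_card_le _)
    have h2 : q.natDegree ≤ m := le_trans (Polynomial.natDegree_sub_le _ _) (by
      simp only [Polynomial.natDegree_X_pow, Polynomial.natDegree_X]
      omega)
    have h3 := le_trans h1 (le_trans (Polynomial.card_roots' q) h2)
    rw [hcard] at h3
    nlinarith
  -- the fixed vectors span everything
  have hspan : ⊤ ≤ Submodule.span F {v : Fin r → F | u v = v} := by
    intro v _
    have hfix : ∀ w : Fin r → F, w + u w ∈ {v : Fin r → F | u v = v} := by
      intro w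
      simp only [Set.mem_setOf_eq]
      rw [hu_add, huu]
      abel
    have h1 : (v + u v) ∈ Submodule.span F {v : Fin r → F | u v = v} :=
      Submodule.subset_span (hfix v)
    have h2 : (μ • v + u (μ • v)) ∈ Submodule.span F {v : Fin r → F | u v = v} :=
      Submodule.subset_span (hfix (μ • v))
    have hv : v = (ε μ - μ)⁻¹ • (ε μ • (v + u v) - (μ • v + u (μ • v))) := by
      rw [hu_smul]
      rw [smul_add]
      rw [show ε μ • v + ε μ • u v - (μ • v + ε μ • u v) = (ε μ - μ) • v by
        rw [sub_smul]; abel]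
      rw [smul_smul, inv_mul_cancel₀ (sub_ne_zero.mpr hμ), one_smul]
    rw [hv]
    exact Submodule.smul_mem _ _ (Submodule.sub_mem _ (Submodule.smul_mem _ _ h1) h2)
  -- a basis of fixed vectors
  let b0 := Module.Basis.ofSpan hspan
  haveI := FiniteDimensional.fintypeBasisIndex b0
  let e := b0.indexEquiv (Pi.basisFun F (Fin r))
  let b := b0.reindex e
  have hbfix : ∀ j : Fin r, u (b j) = b j := by
    intro j
    have hmem : b j ∈ {v : Fin r → F | u v = v} := by
      have h1 : b j = b0 (e.symm j) := Module.Basis.reindex_apply b0 e j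
      rw [h1]
      exact Module.Basis.ofSpan_subset hspan (Set.mem_range_self _)
    exact hmem
  -- the conjugating matrix
  set Sm : Matrix (Fin r) (Fin r) F := (Pi.basisFun F (Fin r)).toMatrix ⇑b with hSmdef
  haveI : Invertible Sm := (Pi.basisFun F (Fin r)).invertibleToMatrix b
  set S : GL (Fin r) F := unitOfInvertible Sm with hSdef
  have hSval : (S : Matrix (Fin r) (Fin r) F) = Sm := rfl
  have hSmentry : ∀ i j, Sm i j = b j i := by
    intro i j
    rw [hSmdef, Module.Basis.toMatrix_apply, Pi.basisFun_repr]
  have hcol : ∀ j, (fun i => ε (Sm i j)) =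
      (P' : Matrix (Fin r) (Fin r) F).mulVec (fun i => Sm i j) := by
    intro j
    have h1 := hbfix j
    rw [hudef] at h1
    have h2 := congrArg ((P' : Matrix (Fin r) (Fin r) F).mulVec) h1
    rw [Matrix.mulVec_mulVec, Units.mul_inv, Matrix.one_mulVec] at h2
    funext i
    have h3 := congrFun h2 i
    simp only [hSmentry]
    rw [← h3]
  have hSmap : Sm.map ε = (P' : Matrix (Fin r) (Fin r) F) * Sm := by
    ext i j
    have h1 := congrFun (hcol j) i
    rw [Matrix.map_apply, h1]
    simp [Matrix.mulVec, dotProduct, Matrix.mul_apply]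
  have hφS : φ S = P' * S := Units.ext (by
    rw [hφval]
    exact hSmap)
  refine ⟨S, ?_⟩
  intro g i j
  have key : φ (S⁻¹ * ρ g * S) = S⁻¹ * ρ g * S := by
    rw [_root_.map_mul, _root_.map_mul, map_inv, hφS, hiso'' g, _root_.mul_inv_rev]
    group
  have hval := congrArg Units.val key
  rw [hφval] at hval
  have hentry := congrFun (congrFun hval i) j
  rw [Matrix.map_apply] at hentry
  rw [← hε _]
  exact hentry
end

section
/- Let G be a group, k a field, N ≥ 1, and R_1, R_2 : G → GL_N(k) two group homomorphisms whose restrictions to the commutator subgroup [G,G] are equal, and such that the restriction of R_1 to [G,G] is absolutely irreducible, i.e., the k-linear span of R_1([G,G]) is the full algebra of N×N matrices over k. Then there exists a group homomorphism η : G → kˣ such that R_2(g) = η(g) · R_1(g) for every g ∈ G. -/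
open Matrix
open scoped MatrixGroups

/-- If two representations `R₁, R₂ : G → GL_N(k)` agree on the commutator subgroup `[G,G]`
and the restriction of `R₁` to `[G,G]` is absolutely irreducible, then `R₂ = R₁ ⊗ η` for
some character `η : G → kˣ`. -/
theorem exists_character_of_eq_on_commutator
    (G : Type*) [Group G] (k : Type*) [Field k] (N : ℕ) (hN : 1 ≤ N)
    (R₁ R₂ : G →* GL (Fin N) k)
    (heq : ∀ g ∈ commutator G, R₁ g = R₂ g)
    (habsirr : Submodule.span k
        ((fun g : G => (R₁ g : Matrix (Fin N) (Fin N) k)) '' (commutator G : Set G)) =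
      (⊤ : Submodule k (Matrix (Fin N) (Fin N) k))) :
    ∃ η : G →* kˣ, ∀ g : G,
      (R₂ g : Matrix (Fin N) (Fin N) k) = (η g : k) • (R₁ g : Matrix (Fin N) (Fin N) k) := by
  haveI hNE : Nonempty (Fin N) := ⟨⟨0, hN⟩⟩
  -- the "twist" T g = R₁(g)⁻¹ R₂(g), as a unit of the matrix ring
  set T : G → (Matrix (Fin N) (Fin N) k)ˣ := fun g => (R₁ g)⁻¹ * R₂ g with hT
  -- T g commutes with R₁ h for h in the commutator subgroup
  have hcomm : ∀ g : G, ∀ h ∈ commutator G,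
      Commute ((T g : Matrix (Fin N) (Fin N) k)) (R₁ h : Matrix (Fin N) (Fin N) k) := by
    intro g h hh
    have hconj : g * h * g⁻¹ ∈ commutator G :=
      (Subgroup.Normal.conj_mem inferInstance h hh g)
    have key : (T g) * R₁ h = R₁ h * (T g) := by
      have h1 : R₁ h = R₂ h := heq h hh
      have h2 : R₁ (g * h * g⁻¹) = R₂ (g * h * g⁻¹) := heq _ hconj
      calc (R₁ g)⁻¹ * R₂ g * R₁ h = (R₁ g)⁻¹ * (R₂ g * R₂ h) := by rw [h1, mul_assoc]
        _ = (R₁ g)⁻¹ * R₂ (g * h) := by rw [_root_.map_mul R₂]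
        _ = (R₁ g)⁻¹ * (R₂ (g * h * g⁻¹) * R₂ g) := by
              rw [← _root_.map_mul R₂]; congr 1; group
        _ = (R₁ g)⁻¹ * (R₁ (g * h * g⁻¹) * R₂ g) := by rw [h2]
        _ = (R₁ g)⁻¹ * (R₁ g * R₁ h * (R₁ g)⁻¹ * R₂ g) := by
              rw [← _root_.map_mul R₁, ← _root_.map_inv R₁, ← _root_.map_mul R₁]
        _ = R₁ h * ((R₁ g)⁻¹ * R₂ g) := by group
    have := congrArg (Units.val) key
    simpa [Commute, SemiconjBy, Units.val_mul] using this
  -- hence T g commutes with every matrix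
  have hcomm' : ∀ g : G, ∀ M : Matrix (Fin N) (Fin N) k,
      Commute ((T g : Matrix (Fin N) (Fin N) k)) M := by
    intro g M
    have hM : M ∈ Submodule.span k
        ((fun g : G => (R₁ g : Matrix (Fin N) (Fin N) k)) '' (commutator G : Set G)) := by
      rw [habsirr]; trivial
    induction hM using Submodule.span_induction with
    | mem x hx =>
        obtain ⟨h, hh, rfl⟩ := hx
        exact hcomm g h hh
    | zero => exact Commute.zero_right _
    | add x y _ _ hx hy => exact hx.add_right hy
    | smul c x _ hx => exact hx.smul_right c
  -- therefore T g is a scalar matrix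
  have hscalar : ∀ g : G, ∃ α : k, Matrix.scalar (Fin N) α = (T g : Matrix (Fin N) (Fin N) k) := by
    intro g
    have := Matrix.mem_range_scalar_of_commute_single
      (M := (T g : Matrix (Fin N) (Fin N) k)) (fun i j _ => (hcomm' g _).symm)
    obtain ⟨α, hα⟩ := this
    exact ⟨α, hα⟩
  choose α hα using hscalar
  -- α g ≠ 0
  have hα0 : ∀ g : G, α g ≠ 0 := by
    intro g h0
    have : (T g : Matrix (Fin N) (Fin N) k) = 0 := by
      rw [← hα g, h0, map_zero]
    exact (T g).ne_zero this
  -- multiplicativity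
  have hmul : ∀ g h : G, α (g * h) = α g * α h := by
    intro g h
    have hTgh : (T (g * h) : Matrix (Fin N) (Fin N) k)
        = (T g : Matrix (Fin N) (Fin N) k) * (T h : Matrix (Fin N) (Fin N) k) := by
      have : T (g * h) = T g * T h := by
        have hc : (R₁ h)⁻¹ * T g = T g * (R₁ h)⁻¹ := by
          apply Units.ext
          have := (hcomm' g (((R₁ h)⁻¹ : GL (Fin N) k) : Matrix (Fin N) (Fin N) k)).symm
          simpa [Commute, SemiconjBy, Units.val_mul] using this
        calc T (g * h) = (R₁ (g * h))⁻¹ * R₂ (g * h) := rfl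
          _ = (R₁ h)⁻¹ * ((R₁ g)⁻¹ * R₂ g) * R₂ h := by
              rw [_root_.map_mul R₁, _root_.map_mul R₂, _root_.mul_inv_rev]; group
          _ = (R₁ h)⁻¹ * T g * R₂ h := rfl
          _ = T g * ((R₁ h)⁻¹ * R₂ h) := by rw [hc]; group
          _ = T g * T h := rfl
      rw [this, Units.val_mul]
    apply (Matrix.scalar_inj (n := Fin N) (α := k)).mp
    rw [RingHom.map_mul, hα, hα, hα, hTgh]
  -- build the character
  refine ⟨MonoidHom.mk' (fun g => Units.mk0 (α g) (hα0 g)) ?_, ?_⟩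
  · intro g h
    ext
    simp [hmul]
  · intro g
    have hTg : (T g : Matrix (Fin N) (Fin N) k)
        = (↑(R₁ g)⁻¹ : Matrix (Fin N) (Fin N) k) * (R₂ g : Matrix (Fin N) (Fin N) k) := rfl
    have : (R₂ g : Matrix (Fin N) (Fin N) k)
        = (R₁ g : Matrix (Fin N) (Fin N) k) * (T g : Matrix (Fin N) (Fin N) k) := by
      rw [hTg, ← Matrix.mul_assoc]
      have : (R₁ g : Matrix (Fin N) (Fin N) k) * (↑(R₁ g)⁻¹ : Matrix (Fin N) (Fin N) k) = 1 := by
        rw [← Units.val_mul, mul_inv_cancel, Units.val_one]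
      rw [this, Matrix.one_mul]
    rw [this, ← hα g]
    rw [Matrix.scalar_apply, ← Matrix.smul_one_eq_diagonal, Matrix.mul_smul, Matrix.mul_one]
    rfl
end
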